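/- arXiv:1912.00564 — 7 statements merged into one kernel-verified Lean document; each statement's English description precedes it below -/
import Mathlib

section
/- For every p ∈ [1,∞), the p-Gromov–Hausdorff distance d_GH^{(p)} is a p-metric on isometry classes of nonempty compact metric spaces. Precisely: (i) for all nonempty compact metric spaces X, Y, Z one has d_GH^{(p)}(X,Y)^p ≤ d_GH^{(p)}(X,Z)^p + d_GH^{(p)}(Z,Y)^p; and (ii) d_GH^{(p)}(X,Y) = 0 if and only if there exists a bijective isometry from X onto Y. -/
noncomputable section

/-- A correspondence between `X` and `Y`: a subset of `X × Y` whose coordinate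
projections are both surjective. -/
def IsCorrespondence {X Y : Type*} (R : Set (X × Y)) : Prop :=
  (∀ x : X, ∃ y : Y, (x, y) ∈ R) ∧ ∀ y : Y, ∃ x : X, (x, y) ∈ R

/-- `Λ_p(a,b) = |a^p - b^p|^(1/p)`. -/
def lambdaP (p a b : ℝ) : ℝ := |a ^ p - b ^ p| ^ (1 / p)

/-- The `p`-distortion of a correspondence between two metric spaces. -/
def pDistortion {X Y : Type*} [MetricSpace X] [MetricSpace Y] (p : ℝ)
    (R : Set (X × Y)) : ℝ :=
  sSup {r : ℝ | ∃ a ∈ R, ∃ b ∈ R, r = lambdaP p (dist a.1 b.1) (dist a.2 b.2)}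

/-- The `p`-Gromov–Hausdorff distance `2^(-1/p) · inf_R dis_p(R)`. -/
def dGHp (p : ℝ) (X Y : Type) [MetricSpace X] [MetricSpace Y] : ℝ :=
  (2 : ℝ) ^ (-(1 / p)) *
    sInf {r : ℝ | ∃ R : Set (X × Y), IsCorrespondence R ∧ r = pDistortion p R}

-- aux lemmas

lemma lambdaP_nonneg (p a b : ℝ) : 0 ≤ lambdaP p a b := Real.rpow_nonneg (abs_nonneg _) _

lemma lambdaP_rpow {p : ℝ} (hp : 0 < p) (a b : ℝ) : lambdaP p a b ^ p = |a ^ p - b ^ p| := by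
  rw [lambdaP, ← Real.rpow_mul (abs_nonneg _), one_div, inv_mul_cancel₀ hp.ne', Real.rpow_one]

lemma lambdaP_comm (p a b : ℝ) : lambdaP p a b = lambdaP p b a := by
  rw [lambdaP, lambdaP, abs_sub_comm]

lemma lambdaP_self {p : ℝ} (hp : 0 < p) (a : ℝ) : lambdaP p a a = 0 := by
  rw [lambdaP, sub_self, abs_zero, Real.zero_rpow (one_div_ne_zero hp.ne')]

lemma real_add_rpow_le {p : ℝ} (hp : 1 ≤ p) {x y : ℝ} (hx : 0 ≤ x) (hy : 0 ≤ y) :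
    x ^ p + y ^ p ≤ (x + y) ^ p := by
  lift x to NNReal using hx
  lift y to NNReal using hy
  rw [← NNReal.coe_rpow, ← NNReal.coe_rpow, ← NNReal.coe_add, ← NNReal.coe_add,
    ← NNReal.coe_rpow, NNReal.coe_le_coe]
  exact NNReal.add_rpow_le_rpow_add _ _ hp

lemma abs_sub_le_lambdaP {p : ℝ} (hp : 1 ≤ p) {a b : ℝ} (ha : 0 ≤ a) (hb : 0 ≤ b) :
    |a - b| ≤ lambdaP p a b := by
  have hp0 : (0:ℝ) < p := lt_of_lt_of_le one_pos hp
  wlog hab : b ≤ a generalizing a b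
  · rw [abs_sub_comm, lambdaP_comm]; exact this hb ha (le_of_not_ge hab)
  have h1 : (a - b) ^ p + b ^ p ≤ a ^ p := by
    have := real_add_rpow_le hp (sub_nonneg.2 hab) hb
    rwa [sub_add_cancel] at this
  have h2 : |a - b| ^ p ≤ |a ^ p - b ^ p| := by
    rw [abs_of_nonneg (sub_nonneg.2 hab),
      abs_of_nonneg (sub_nonneg.2 (Real.rpow_le_rpow hb hab hp0.le))]
    linarith
  calc |a - b| = (|a - b| ^ p) ^ (1/p) := by
        rw [← Real.rpow_mul (abs_nonneg _), mul_one_div, div_self hp0.ne', Real.rpow_one]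
    _ ≤ lambdaP p a b :=
        Real.rpow_le_rpow (Real.rpow_nonneg (abs_nonneg _) _) h2 (by positivity)

section Spaces

variable {X Y : Type*} [MetricSpace X] [MetricSpace Y]

lemma pDistortion_nonneg (p : ℝ) (R : Set (X × Y)) : 0 ≤ pDistortion p R :=
  Real.sSup_nonneg fun r ⟨a, _, b, _, hr⟩ => hr ▸ lambdaP_nonneg p _ _

lemma distSet_bddAbove {p : ℝ} (hp : 1 ≤ p) [CompactSpace X] [CompactSpace Y]
    (R : Set (X × Y)) :
    BddAbove {r : ℝ | ∃ a ∈ R, ∃ b ∈ R, r = lambdaP p (dist a.1 b.1) (dist a.2 b.2)} := by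
  have hp0 : (0:ℝ) ≤ p := le_trans zero_le_one hp
  refine ⟨(Metric.diam (Set.univ : Set X) ^ p + Metric.diam (Set.univ : Set Y) ^ p) ^ (1/p), ?_⟩
  rintro r ⟨a, _, b, _, rfl⟩
  have hX : dist a.1 b.1 ^ p ≤ Metric.diam (Set.univ : Set X) ^ p :=
    Real.rpow_le_rpow dist_nonneg
      (Metric.dist_le_diam_of_mem isCompact_univ.isBounded trivial trivial) hp0
  have hY : dist a.2 b.2 ^ p ≤ Metric.diam (Set.univ : Set Y) ^ p :=
    Real.rpow_le_rpow dist_nonneg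
      (Metric.dist_le_diam_of_mem isCompact_univ.isBounded trivial trivial) hp0
  have h1 : (0:ℝ) ≤ dist a.1 b.1 ^ p := Real.rpow_nonneg dist_nonneg _
  have h2 : (0:ℝ) ≤ dist a.2 b.2 ^ p := Real.rpow_nonneg dist_nonneg _
  exact Real.rpow_le_rpow (abs_nonneg _) (abs_le.2 ⟨by linarith, by linarith⟩) (by positivity)

lemma le_pDistortion {p : ℝ} (hp : 1 ≤ p) [CompactSpace X] [CompactSpace Y]
    {R : Set (X × Y)} {a b : X × Y} (ha : a ∈ R) (hb : b ∈ R) :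
    lambdaP p (dist a.1 b.1) (dist a.2 b.2) ≤ pDistortion p R :=
  le_csSup (distSet_bddAbove hp R) ⟨a, ha, b, hb, rfl⟩

end Spaces


section Comp

variable {X Y Z : Type*} [MetricSpace X] [MetricSpace Y] [MetricSpace Z]
  [CompactSpace X] [CompactSpace Y] [CompactSpace Z]

lemma exists_comp_corr {p : ℝ} (hp : 1 ≤ p)
    {R₁ : Set (X × Z)} {R₂ : Set (Z × Y)}
    (h₁ : IsCorrespondence R₁) (h₂ : IsCorrespondence R₂) :
    ∃ R : Set (X × Y), IsCorrespondence R ∧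
      pDistortion p R ≤ (pDistortion p R₁ ^ p + pDistortion p R₂ ^ p) ^ (1/p) := by
  have hp0 : (0:ℝ) < p := lt_of_lt_of_le one_pos hp
  have hD₁ : (0:ℝ) ≤ pDistortion p R₁ := pDistortion_nonneg p R₁
  have hD₂ : (0:ℝ) ≤ pDistortion p R₂ := pDistortion_nonneg p R₂
  have hsum : (0:ℝ) ≤ pDistortion p R₁ ^ p + pDistortion p R₂ ^ p :=
    add_nonneg (Real.rpow_nonneg hD₁ _) (Real.rpow_nonneg hD₂ _)
  refine ⟨{q : X × Y | ∃ z : Z, (q.1, z) ∈ R₁ ∧ (z, q.2) ∈ R₂}, ⟨?_, ?_⟩, ?_⟩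
  · intro x
    obtain ⟨z, hz⟩ := h₁.1 x
    obtain ⟨y, hy⟩ := h₂.1 z
    exact ⟨y, z, hz, hy⟩
  · intro y
    obtain ⟨z, hz⟩ := h₂.2 y
    obtain ⟨x, hx⟩ := h₁.2 z
    exact ⟨x, z, hx, hz⟩
  · refine Real.sSup_le ?_ (Real.rpow_nonneg hsum _)
    rintro r ⟨a, ⟨z, haz, hza⟩, b, ⟨w, hbw, hwb⟩, rfl⟩
    have e1 : lambdaP p (dist a.1 b.1) (dist z w) ≤ pDistortion p R₁ :=
      le_pDistortion hp (a := (a.1, z)) (b := (b.1, w)) haz hbw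
    have e2 : lambdaP p (dist z w) (dist a.2 b.2) ≤ pDistortion p R₂ :=
      le_pDistortion hp (a := (z, a.2)) (b := (w, b.2)) hza hwb
    have t1 : |dist a.1 b.1 ^ p - dist z w ^ p| ≤ pDistortion p R₁ ^ p := by
      have := Real.rpow_le_rpow (lambdaP_nonneg p _ _) e1 hp0.le
      rwa [lambdaP_rpow hp0] at this
    have t2 : |dist z w ^ p - dist a.2 b.2 ^ p| ≤ pDistortion p R₂ ^ p := by
      have := Real.rpow_le_rpow (lambdaP_nonneg p _ _) e2 hp0.le
      rwa [lambdaP_rpow hp0] at this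
    refine Real.rpow_le_rpow (abs_nonneg _) ?_ (by positivity)
    calc |dist a.1 b.1 ^ p - dist a.2 b.2 ^ p|
        ≤ |dist a.1 b.1 ^ p - dist z w ^ p| + |dist z w ^ p - dist a.2 b.2 ^ p| :=
          abs_sub_le _ _ _
      _ ≤ pDistortion p R₁ ^ p + pDistortion p R₂ ^ p := add_le_add t1 t2

end Comp

section Corr

variable (p : ℝ) (X Y : Type) [MetricSpace X] [MetricSpace Y]

/-- The set of distortions of correspondences. -/
def corrSet : Set ℝ :=
  {r : ℝ | ∃ R : Set (X × Y), IsCorrespondence R ∧ r = pDistortion p R}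

lemma dGHp_eq : dGHp p X Y = (2 : ℝ) ^ (-(1 / p)) * sInf (corrSet p X Y) := rfl

lemma corrSet_nonempty [Nonempty X] [Nonempty Y] : (corrSet p X Y).Nonempty := by
  refine ⟨pDistortion p (Set.univ : Set (X × Y)), Set.univ, ⟨?_, ?_⟩, rfl⟩
  · exact fun x => ⟨Classical.arbitrary Y, trivial⟩
  · exact fun y => ⟨Classical.arbitrary X, trivial⟩

lemma corrSet_bddBelow : BddBelow (corrSet p X Y) := by
  refine ⟨0, ?_⟩
  rintro r ⟨R, _, rfl⟩
  exact pDistortion_nonneg p R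

lemma sInf_corrSet_nonneg : 0 ≤ sInf (corrSet p X Y) := by
  refine Real.sInf_nonneg ?_
  rintro r ⟨R, _, rfl⟩
  exact pDistortion_nonneg p R

end Corr



/-- For every `p ∈ [1,∞)`, `d_GH^{(p)}` is a `p`-metric on isometry classes of nonempty
compact metric spaces: it satisfies the `p`-triangle inequality, and it vanishes iff the
spaces are isometric. -/
theorem dGHp_is_pMetric (p : ℝ) (hp : 1 ≤ p)
    (X Y Z : Type) [MetricSpace X] [CompactSpace X] [Nonempty X]
    [MetricSpace Y] [CompactSpace Y] [Nonempty Y]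
    [MetricSpace Z] [CompactSpace Z] [Nonempty Z] :
    dGHp p X Y ^ p ≤ dGHp p X Z ^ p + dGHp p Z Y ^ p ∧
      (dGHp p X Y = 0 ↔ Nonempty (X ≃ᵢ Y)) := by
  have hp0 : (0:ℝ) < p := lt_of_lt_of_le one_pos hp
  have hc : (0:ℝ) < (2:ℝ) ^ (-(1/p)) := Real.rpow_pos_of_pos two_pos _
  have hcp : ((2:ℝ) ^ (-(1/p))) ^ p = 1/2 := by
    rw [← Real.rpow_mul (by norm_num : (0:ℝ) ≤ 2),
      show (-(1/p))*p = -1 by field_simp, Real.rpow_neg_one]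
    norm_num
  constructor
  · -- p-triangle inequality
    set T₀ := sInf (corrSet p X Y) with hT₀def
    set T₁ := sInf (corrSet p X Z) with hT₁def
    set T₂ := sInf (corrSet p Z Y) with hT₂def
    have hT₀ : 0 ≤ T₀ := sInf_corrSet_nonneg p X Y
    have hT₁ : 0 ≤ T₁ := sInf_corrSet_nonneg p X Z
    have hT₂ : 0 ≤ T₂ := sInf_corrSet_nonneg p Z Y
    have key : ∀ ε : ℝ, ε ∈ Set.Ioi (0:ℝ) → T₀ ^ p ≤ (T₁ + ε) ^ p + (T₂ + ε) ^ p := by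
      intro ε hε
      rw [Set.mem_Ioi] at hε
      obtain ⟨D₁, hD₁mem, hD₁lt⟩ := exists_lt_of_csInf_lt (corrSet_nonempty p X Z)
        (show T₁ < T₁ + ε by linarith)
      obtain ⟨D₂, hD₂mem, hD₂lt⟩ := exists_lt_of_csInf_lt (corrSet_nonempty p Z Y)
        (show T₂ < T₂ + ε by linarith)
      obtain ⟨R₁, hR₁, rfl⟩ := hD₁mem
      obtain ⟨R₂, hR₂, rfl⟩ := hD₂mem
      obtain ⟨R, hR, hle⟩ := exists_comp_corr hp hR₁ hR₂
      have hsum : (0:ℝ) ≤ pDistortion p R₁ ^ p + pDistortion p R₂ ^ p :=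
        add_nonneg (Real.rpow_nonneg (pDistortion_nonneg p R₁) _)
          (Real.rpow_nonneg (pDistortion_nonneg p R₂) _)
      have h1 : T₀ ≤ (pDistortion p R₁ ^ p + pDistortion p R₂ ^ p) ^ (1/p) :=
        le_trans (csInf_le (corrSet_bddBelow p X Y) ⟨R, hR, rfl⟩) hle
      have h2 : T₀ ^ p ≤ pDistortion p R₁ ^ p + pDistortion p R₂ ^ p := by
        have := Real.rpow_le_rpow hT₀ h1 hp0.le
        rwa [← Real.rpow_mul hsum, one_div, inv_mul_cancel₀ hp0.ne', Real.rpow_one] at this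
      have h3 : pDistortion p R₁ ^ p ≤ (T₁ + ε) ^ p :=
        Real.rpow_le_rpow (pDistortion_nonneg p R₁) hD₁lt.le hp0.le
      have h4 : pDistortion p R₂ ^ p ≤ (T₂ + ε) ^ p :=
        Real.rpow_le_rpow (pDistortion_nonneg p R₂) hD₂lt.le hp0.le
      linarith
    have hlim : Filter.Tendsto (fun ε : ℝ => (T₁ + ε) ^ p + (T₂ + ε) ^ p)
        (nhdsWithin 0 (Set.Ioi 0)) (nhds (T₁ ^ p + T₂ ^ p)) := by
      have hcont : Continuous fun ε : ℝ => (T₁ + ε) ^ p + (T₂ + ε) ^ p :=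
        ((continuous_const.add continuous_id).rpow_const fun _ => Or.inr hp0.le).add
          ((continuous_const.add continuous_id).rpow_const fun _ => Or.inr hp0.le)
      have := hcont.tendsto 0
      simp only [add_zero] at this
      exact this.mono_left nhdsWithin_le_nhds
    have main : T₀ ^ p ≤ T₁ ^ p + T₂ ^ p :=
      ge_of_tendsto hlim (by filter_upwards [self_mem_nhdsWithin] with ε hε using key ε hε)
    rw [dGHp_eq p X Y, dGHp_eq p X Z, dGHp_eq p Z Y, ← hT₀def, ← hT₁def, ← hT₂def,
      Real.mul_rpow hc.le hT₀, Real.mul_rpow hc.le hT₁, Real.mul_rpow hc.le hT₂, hcp]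
    linarith
  · constructor
    · -- dGHp = 0 → isometric
      intro h0
      rw [dGHp_eq] at h0
      have hT : sInf (corrSet p X Y) = 0 := by
        rcases mul_eq_zero.mp h0 with h | h
        · exact absurd h hc.ne'
        · exact h
      have hgh : GromovHausdorff.ghDist X Y ≤ 0 := by
        refine le_of_forall_pos_le_add ?_
        intro δ hδ
        obtain ⟨D, hDmem, hDlt⟩ := exists_lt_of_csInf_lt (corrSet_nonempty p X Y)
          (show sInf (corrSet p X Y) < δ/2 by rw [hT]; positivity)
        obtain ⟨R, hR, rfl⟩ := hDmem
        have key : ∀ (x x' : X) (y y' : Y), (x, y) ∈ R → (x', y') ∈ R →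
            |dist x x' - dist y y'| ≤ pDistortion p R := by
          intro x x' y y' h h'
          exact le_trans (abs_sub_le_lambdaP hp dist_nonneg dist_nonneg)
            (le_pDistortion hp (a := (x, y)) (b := (x', y')) h h')
        have hΦ : ∀ x : (Set.univ : Set X), ∃ y : Y, ((x : X), y) ∈ R := fun x => hR.1 x
        choose Φ hΦmem using hΦ
        have hgh2 := GromovHausdorff.ghDist_le_of_approx_subsets Φ
          (ε₁ := 0) (ε₂ := pDistortion p R) (ε₃ := pDistortion p R) ?_ ?_ ?_
        · calc GromovHausdorff.ghDist X Y ≤ 0 + pDistortion p R / 2 + pDistortion p R := hgh2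
            _ ≤ 0 + δ := by linarith
        · intro x; exact ⟨x, trivial, by simp⟩
        · intro y
          obtain ⟨x, hx⟩ := hR.2 y
          refine ⟨⟨x, trivial⟩, ?_⟩
          have := key x x y (Φ ⟨x, trivial⟩) hx (hΦmem ⟨x, trivial⟩)
          rwa [dist_self, zero_sub, abs_neg, abs_of_nonneg dist_nonneg] at this
        · intro x y
          rw [Subtype.dist_eq]
          exact key x y (Φ x) (Φ y) (hΦmem x) (hΦmem y)
      have h0' : GromovHausdorff.ghDist X Y = 0 := le_antisymm hgh dist_nonneg
      exact GromovHausdorff.toGHSpace_eq_toGHSpace_iff_isometryEquiv.mp (dist_eq_zero.mp h0')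
    · -- isometric → dGHp = 0
      rintro ⟨e⟩
      have hdis : pDistortion p {q : X × Y | q.2 = e q.1} = 0 := by
        refine le_antisymm (Real.sSup_le ?_ le_rfl) (pDistortion_nonneg _ _)
        rintro r ⟨a, ha, b, hb, rfl⟩
        simp only [Set.mem_setOf_eq] at ha hb
        rw [ha, hb, e.isometry.dist_eq, lambdaP_self hp0]
      have hmem : (0:ℝ) ∈ corrSet p X Y :=
        ⟨{q : X × Y | q.2 = e q.1},
          ⟨fun x => ⟨e x, rfl⟩, fun y => ⟨e.symm y, by simp⟩⟩, hdis.symm⟩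
      have hT : sInf (corrSet p X Y) = 0 :=
        le_antisymm (csInf_le (corrSet_bddBelow p X Y) hmem) (sInf_corrSet_nonneg p X Y)
      rw [dGHp_eq, hT, mul_zero]
end
end

section
/- Let p ∈ [1,∞) and let (X,d_X), (Y,d_Y) be nonempty compact metric spaces each satisfying the p-triangle inequality. Then d_GH^{(p)}(X,Y) equals the infimum, over all metrics d on the disjoint union X ⊔ Y which satisfy the p-triangle inequality and which restrict to d_X on X × X and to d_Y on Y × Y, of the Hausdorff distance in (X ⊔ Y, d) between the copy of X and the copy of Y. -/
noncomputable section

/-! ### Auxiliary lemmas -/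

section Aux

variable {p : ℝ}

lemma aux_rpow_inv_rpow (hp : 1 ≤ p) {t : ℝ} (ht : 0 ≤ t) : (t ^ (1 / p)) ^ p = t := by
  rw [one_div, Real.rpow_inv_rpow ht (by positivity)]

lemma aux_rpow_rpow_inv (hp : 1 ≤ p) {t : ℝ} (ht : 0 ≤ t) : (t ^ p) ^ (1 / p) = t := by
  rw [one_div, Real.rpow_rpow_inv ht (by positivity)]

lemma aux_le_of_rpow_le (hp : 1 ≤ p) {a b : ℝ} (ha : 0 ≤ a) (hb : 0 ≤ b)
    (h : a ^ p ≤ b ^ p) : a ≤ b := by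
  have := Real.rpow_le_rpow (by positivity) h (by positivity : (0:ℝ) ≤ 1 / p)
  rwa [aux_rpow_rpow_inv hp ha, aux_rpow_rpow_inv hp hb] at this

lemma aux_rpow_le_rpow (hp : 1 ≤ p) {a b : ℝ} (ha : 0 ≤ a) (h : a ≤ b) :
    a ^ p ≤ b ^ p := Real.rpow_le_rpow ha h (by positivity)

/-- A bound on every metric space that is compact. -/
lemma aux_bound (X : Type) [MetricSpace X] [CompactSpace X] :
    ∃ C : ℝ, 0 ≤ C ∧ ∀ x y : X, dist x y ≤ C := by
  obtain ⟨C, hC⟩ := Metric.isBounded_iff.mp (isCompact_univ (X := X)).isBounded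
  exact ⟨max C 0, le_max_right _ _, fun x y => le_trans (hC trivial trivial) (le_max_left _ _)⟩

end Aux

section Main

variable (p : ℝ) (X Y : Type) [MetricSpace X] [CompactSpace X] [Nonempty X]
  [MetricSpace Y] [CompactSpace Y] [Nonempty Y]

/-- The RHS set of admissible glued semimetrics. -/
def S2set : Set ℝ :=
  {r : ℝ | ∃ d : X ⊕ Y → X ⊕ Y → ℝ,
        (∀ a b, 0 ≤ d a b) ∧
        (∀ a b, d a b = 0 ↔ a = b) ∧
        (∀ a b, d a b = d b a) ∧
        (∀ a b c, d a c ^ p ≤ d a b ^ p + d b c ^ p) ∧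
        (∀ x x' : X, d (Sum.inl x) (Sum.inl x') = dist x x') ∧
        (∀ y y' : Y, d (Sum.inr y) (Sum.inr y') = dist y y') ∧
        r = sInf {s : ℝ | 0 < s ∧
              (∀ x : X, ∃ y : Y, d (Sum.inl x) (Sum.inr y) ≤ s) ∧
              (∀ y : Y, ∃ x : X, d (Sum.inl x) (Sum.inr y) ≤ s)}}

variable {p X Y}

/-- Distortion sets are bounded above, and distortions are at most explicit bounds. -/
lemma aux_lambdaP_le (hp : 1 ≤ p) {CX CY : ℝ} (hCX : 0 ≤ CX) (hCY : 0 ≤ CY)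
    (hX : ∀ x y : X, dist x y ≤ CX) (hY : ∀ x y : Y, dist x y ≤ CY)
    (a b : X × Y) :
    lambdaP p (dist a.1 b.1) (dist a.2 b.2) ≤ (CX ^ p + CY ^ p) ^ (1 / p) := by
  unfold lambdaP
  apply Real.rpow_le_rpow (abs_nonneg _) _ (by positivity)
  have h1 : dist a.1 b.1 ^ p ≤ CX ^ p := aux_rpow_le_rpow hp dist_nonneg (hX _ _)
  have h2 : dist a.2 b.2 ^ p ≤ CY ^ p := aux_rpow_le_rpow hp dist_nonneg (hY _ _)
  have h3 : (0:ℝ) ≤ dist a.1 b.1 ^ p := Real.rpow_nonneg dist_nonneg _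
  have h4 : (0:ℝ) ≤ dist a.2 b.2 ^ p := Real.rpow_nonneg dist_nonneg _
  rw [abs_le]; constructor <;> nlinarith

end Main

section Glue

set_option linter.unusedSectionVars false

variable {p : ℝ} {X Y : Type} [MetricSpace X] [CompactSpace X] [Nonempty X]
  [MetricSpace Y] [CompactSpace Y] [Nonempty Y]

/-- The set whose infimum defines the cross-distance of the glued metric. -/
def glueS (p e : ℝ) (R : Set (X × Y)) (x : X) (y : Y) : Set ℝ :=
  {t : ℝ | ∃ a ∈ R, t = dist x a.1 ^ p + e + dist a.2 y ^ p}

/-- The `p`-th power of the cross-distance of the glued metric. -/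
def glueI (p e : ℝ) (R : Set (X × Y)) (x : X) (y : Y) : ℝ :=
  sInf (glueS p e R x y)

/-- The glued (semi)metric on the disjoint union. -/
def glueD (p : ℝ) (I : X → Y → ℝ) : X ⊕ Y → X ⊕ Y → ℝ
  | .inl x, .inl x' => dist x x'
  | .inl x, .inr y => I x y ^ (1 / p)
  | .inr y, .inl x => I x y ^ (1 / p)
  | .inr y, .inr y' => dist y y'

lemma exists_S2_elem (hp : 1 ≤ p)
    (hX : ∀ x y z : X, dist x z ^ p ≤ dist x y ^ p + dist y z ^ p)
    (hY : ∀ x y z : Y, dist x z ^ p ≤ dist x y ^ p + dist y z ^ p)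
    (R : Set (X × Y)) (hR : IsCorrespondence R) {D : ℝ} (hD : 0 < D)
    (hkey : ∀ a ∈ R, ∀ b ∈ R, |dist a.1 b.1 ^ p - dist a.2 b.2 ^ p| ≤ D ^ p) :
    ∃ r ∈ S2set p X Y, r ≤ 2 ^ (-(1 / p)) * D := by
  have hp0 : 0 < p := lt_of_lt_of_le one_pos hp
  set e : ℝ := D ^ p / 2 with he_def
  have hDp : 0 < D ^ p := Real.rpow_pos_of_pos hD p
  have he : 0 < e := by positivity
  have hRne : ∀ x : X, ∃ a ∈ R, True := fun x => by
    obtain ⟨y, hy⟩ := hR.1 x; exact ⟨(x, y), hy, trivial⟩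
  have hSne : ∀ (x : X) (y : Y), (glueS p e R x y).Nonempty := by
    intro x y
    obtain ⟨y', hy'⟩ := hR.1 x
    exact ⟨_, ⟨(x, y'), hy', rfl⟩⟩
  have hSlb : ∀ (x : X) (y : Y), ∀ t ∈ glueS p e R x y, e ≤ t := by
    rintro x y t ⟨a, ha, rfl⟩
    have := Real.rpow_nonneg (dist_nonneg (x := x) (y := a.1)) p
    have := Real.rpow_nonneg (dist_nonneg (x := a.2) (y := y)) p
    linarith
  have hSbdd : ∀ (x : X) (y : Y), BddBelow (glueS p e R x y) :=
    fun x y => ⟨e, fun t ht => hSlb x y t ht⟩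
  set I : X → Y → ℝ := glueI p e R with hI_def
  have hIe : ∀ (x : X) (y : Y), e ≤ I x y := fun x y =>
    le_csInf (hSne x y) (hSlb x y)
  have hI0 : ∀ (x : X) (y : Y), 0 ≤ I x y := fun x y => le_trans he.le (hIe x y)
  have hIpos : ∀ (x : X) (y : Y), 0 < I x y := fun x y => lt_of_lt_of_le he (hIe x y)
  have hIle : ∀ (x : X) (y : Y), ∀ a ∈ R,
      I x y ≤ dist x a.1 ^ p + e + dist a.2 y ^ p :=
    fun x y a ha => csInf_le (hSbdd x y) ⟨a, ha, rfl⟩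
  -- triangle-type inequalities for `I`
  have h1 : ∀ (x x' : X) (y : Y), I x y ≤ dist x x' ^ p + I x' y := by
    intro x x' y
    rw [← sub_le_iff_le_add']
    refine le_csInf (hSne x' y) ?_
    rintro t ⟨a, ha, rfl⟩
    have k1 := hIle x y a ha
    have k2 := hX x x' a.1
    rw [sub_le_iff_le_add']
    linarith
  have h2 : ∀ (x : X) (y y' : Y), I x y ≤ I x y' + dist y' y ^ p := by
    intro x y y'
    rw [← sub_le_iff_le_add]
    refine le_csInf (hSne x y') ?_
    rintro t ⟨a, ha, rfl⟩
    have k1 := hIle x y a ha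
    have k2 := hY a.2 y' y
    rw [sub_le_iff_le_add]
    linarith
  have h3 : ∀ (x x' : X) (y : Y), dist x x' ^ p ≤ I x y + I x' y := by
    intro x x' y
    have key : ∀ t ∈ glueS p e R x y, dist x x' ^ p - t ≤ I x' y := by
      rintro t ⟨a, ha, rfl⟩
      refine le_csInf (hSne x' y) ?_
      rintro t' ⟨b, hb, rfl⟩
      have k := abs_le.mp (hkey a ha b hb)
      have t1 := hX x a.1 x'
      have t2 := hX a.1 b.1 x'
      have t3 := hY a.2 y b.2
      have c1 : dist x' b.1 ^ p = dist b.1 x' ^ p := by rw [dist_comm]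
      have c2 : dist y b.2 ^ p = dist b.2 y ^ p := by rw [dist_comm]
      linarith [k.2]
    have : dist x x' ^ p - I x' y ≤ I x y := by
      refine le_csInf (hSne x y) ?_
      intro t ht
      have := key t ht
      linarith
    linarith
  have h4 : ∀ (x : X) (y y' : Y), dist y y' ^ p ≤ I x y + I x y' := by
    intro x y y'
    have key : ∀ t ∈ glueS p e R x y, dist y y' ^ p - t ≤ I x y' := by
      rintro t ⟨a, ha, rfl⟩
      refine le_csInf (hSne x y') ?_
      rintro t' ⟨b, hb, rfl⟩
      have k := abs_le.mp (hkey a ha b hb)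
      have t1 := hY y a.2 y'
      have t2 := hY a.2 b.2 y'
      have t3 := hX a.1 x b.1
      have c1 : dist y a.2 ^ p = dist a.2 y ^ p := by rw [dist_comm]
      have c2 : dist a.1 x ^ p = dist x a.1 ^ p := by rw [dist_comm]
      linarith [k.1]
    have : dist y y' ^ p - I x y' ≤ I x y := by
      refine le_csInf (hSne x y) ?_
      intro t ht
      have := key t ht
      linarith
    linarith
  -- the glued semimetric
  set d : X ⊕ Y → X ⊕ Y → ℝ := glueD p I with hd_def
  have hcross : ∀ (x : X) (y : Y), d (.inl x) (.inr y) ^ p = I x y := by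
    intro x y
    show (I x y ^ (1 / p)) ^ p = I x y
    exact aux_rpow_inv_rpow hp (hI0 x y)
  have hd0 : ∀ a b, 0 ≤ d a b := by
    rintro (x | y) (x' | y') <;>
      first
        | exact dist_nonneg
        | exact Real.rpow_nonneg (hI0 _ _) _
  have hdpos : ∀ (x : X) (y : Y), 0 < d (.inl x) (.inr y) :=
    fun x y => Real.rpow_pos_of_pos (hIpos x y) _
  refine ⟨sInf {s : ℝ | 0 < s ∧
      (∀ x : X, ∃ y : Y, d (Sum.inl x) (Sum.inr y) ≤ s) ∧
      (∀ y : Y, ∃ x : X, d (Sum.inl x) (Sum.inr y) ≤ s)}, ⟨d, hd0, ?_, ?_, ?_, ?_, ?_, rfl⟩, ?_⟩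
  · -- eq_zero iff
    rintro (x | y) (x' | y')
    · show dist x x' = 0 ↔ _
      rw [dist_eq_zero]; exact ⟨fun h => by rw [h], fun h => Sum.inl.inj h⟩
    · exact iff_of_false (ne_of_gt (hdpos x y')) (by simp)
    · exact iff_of_false (ne_of_gt (hdpos x' y)) (by simp)
    · show dist y y' = 0 ↔ _
      rw [dist_eq_zero]; exact ⟨fun h => by rw [h], fun h => Sum.inr.inj h⟩
  · -- symmetry
    rintro (x | y) (x' | y') <;> first | exact dist_comm _ _ | rfl
  · -- p-triangle inequality
    rintro (x | y) (x' | y') (x'' | y'')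
    · exact hX x x' x''
    · -- L L R
      show d (.inl x) (.inr y'') ^ p ≤ dist x x' ^ p + d (.inl x') (.inr y'') ^ p
      rw [hcross, hcross]; exact h1 x x' y''
    · -- L R L
      show dist x x'' ^ p ≤ d (.inl x) (.inr y') ^ p + d (.inl x'') (.inr y') ^ p
      rw [hcross, hcross]; exact h3 x x'' y'
    · -- L R R
      show d (.inl x) (.inr y'') ^ p ≤ d (.inl x) (.inr y') ^ p + dist y' y'' ^ p
      rw [hcross, hcross]; exact h2 x y'' y'
    · -- R L L
      show d (.inl x'') (.inr y) ^ p ≤ d (.inl x') (.inr y) ^ p + dist x' x'' ^ p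
      rw [hcross, hcross]
      have := h1 x'' x' y
      rwa [dist_comm x'' x', add_comm] at this
    · -- R L R
      show dist y y'' ^ p ≤ d (.inl x') (.inr y) ^ p + d (.inl x') (.inr y'') ^ p
      rw [hcross, hcross]; exact h4 x' y y''
    · -- R R L
      show d (.inl x'') (.inr y) ^ p ≤ dist y y' ^ p + d (.inl x'') (.inr y') ^ p
      rw [hcross, hcross]
      have := h2 x'' y y'
      rwa [dist_comm y' y, add_comm] at this
    · exact hY y y' y''
  · intro x x'; rfl
  · intro y y'; rfl
  · -- the Hausdorff-type infimum is at most `2 ^ (-(1/p)) * D`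
    have hmem : (2 : ℝ) ^ (-(1 / p)) * D ∈ {s : ℝ | 0 < s ∧
        (∀ x : X, ∃ y : Y, d (Sum.inl x) (Sum.inr y) ≤ s) ∧
        (∀ y : Y, ∃ x : X, d (Sum.inl x) (Sum.inr y) ≤ s)} := by
      have hs0 : (0 : ℝ) < 2 ^ (-(1 / p)) * D :=
        mul_pos (Real.rpow_pos_of_pos two_pos _) hD
      have hcov : ∀ a ∈ R, d (Sum.inl a.1) (Sum.inr a.2) ≤ 2 ^ (-(1 / p)) * D := by
        intro a ha
        have h5 : I a.1 a.2 ≤ e := by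
          have := hIle a.1 a.2 a ha
          simp only [dist_self, Real.zero_rpow (ne_of_gt hp0)] at this
          linarith
        have h6 : d (Sum.inl a.1) (Sum.inr a.2) ≤ e ^ (1 / p) := by
          show I a.1 a.2 ^ (1 / p) ≤ e ^ (1 / p)
          exact Real.rpow_le_rpow (hI0 _ _) h5 (by positivity)
        have h7 : e ^ (1 / p) = 2 ^ (-(1 / p)) * D := by
          rw [he_def, Real.div_rpow (le_of_lt hDp) (by norm_num),
            aux_rpow_rpow_inv hp hD.le, Real.rpow_neg (by norm_num)]
          rw [div_eq_mul_inv, mul_comm]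
        rwa [h7] at h6
      refine ⟨hs0, fun x => ?_, fun y => ?_⟩
      · obtain ⟨y, hy⟩ := hR.1 x
        exact ⟨y, hcov (x, y) hy⟩
      · obtain ⟨x, hx⟩ := hR.2 y
        exact ⟨x, hcov (x, y) hx⟩
    exact csInf_le ⟨0, fun s hs => hs.1.le⟩ hmem

end Glue

section MainProof

set_option linter.unusedSectionVars false

variable {p : ℝ} {X Y : Type} [MetricSpace X] [CompactSpace X] [Nonempty X]
  [MetricSpace Y] [CompactSpace Y] [Nonempty Y]

lemma dGHp_eq_S2 (hp : 1 ≤ p)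
    (hX : ∀ x y z : X, dist x z ^ p ≤ dist x y ^ p + dist y z ^ p)
    (hY : ∀ x y z : Y, dist x z ^ p ≤ dist x y ^ p + dist y z ^ p) :
    dGHp p X Y = sInf (S2set p X Y) := by
  have hp0 : 0 < p := lt_of_lt_of_le one_pos hp
  obtain ⟨CX, hCX0, hCX⟩ := aux_bound X
  obtain ⟨CY, hCY0, hCY⟩ := aux_bound Y
  set S1 : Set ℝ := {r : ℝ | ∃ R : Set (X × Y), IsCorrespondence R ∧ r = pDistortion p R}
    with hS1_def
  have htwo : (0:ℝ) < 2 ^ (-(1 / p)) := Real.rpow_pos_of_pos two_pos _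
  have htwo' : (0:ℝ) < 2 ^ ((1 : ℝ) / p) := Real.rpow_pos_of_pos two_pos _
  have htwomul : (2:ℝ) ^ (-(1 / p)) * 2 ^ ((1:ℝ) / p) = 1 := by
    rw [← Real.rpow_add two_pos]; simp
  -- basic facts about S1
  have hunivcorr : IsCorrespondence (Set.univ : Set (X × Y)) :=
    ⟨fun x => ⟨Classical.arbitrary Y, trivial⟩, fun y => ⟨Classical.arbitrary X, trivial⟩⟩
  have hS1ne : S1.Nonempty := ⟨_, Set.univ, hunivcorr, rfl⟩
  have hdis0 : ∀ R : Set (X × Y), 0 ≤ pDistortion p R := by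
    intro R
    apply Real.sSup_nonneg
    rintro r ⟨a, _, b, _, rfl⟩
    exact Real.rpow_nonneg (abs_nonneg _) _
  have hS1lb : ∀ r ∈ S1, (0:ℝ) ≤ r := by rintro r ⟨R, _, rfl⟩; exact hdis0 R
  have hdisbdd : ∀ R : Set (X × Y), BddAbove
      {r : ℝ | ∃ a ∈ R, ∃ b ∈ R, r = lambdaP p (dist a.1 b.1) (dist a.2 b.2)} := by
    intro R
    refine ⟨(CX ^ p + CY ^ p) ^ (1 / p), ?_⟩
    rintro r ⟨a, _, b, _, rfl⟩
    exact aux_lambdaP_le hp hCX0 hCY0 hCX hCY a b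
  -- key distortion estimate
  have hkeyD : ∀ (R : Set (X × Y)) (δ : ℝ), 0 < δ →
      ∀ a ∈ R, ∀ b ∈ R,
        |dist a.1 b.1 ^ p - dist a.2 b.2 ^ p| ≤ (pDistortion p R + δ) ^ p := by
    intro R δ hδ a ha b hb
    have hlam : lambdaP p (dist a.1 b.1) (dist a.2 b.2) ≤ pDistortion p R :=
      le_csSup (hdisbdd R) ⟨a, ha, b, hb, rfl⟩
    have habs : |dist a.1 b.1 ^ p - dist a.2 b.2 ^ p| =
        (lambdaP p (dist a.1 b.1) (dist a.2 b.2)) ^ p :=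
      (aux_rpow_inv_rpow hp (abs_nonneg _)).symm
    rw [habs]
    refine aux_rpow_le_rpow hp (Real.rpow_nonneg (abs_nonneg _) _) ?_
    linarith
  have hS2lb : ∀ r ∈ S2set p X Y, (0:ℝ) ≤ r := by
    rintro r ⟨d, hd0, _, _, _, _, _, rfl⟩
    exact Real.sInf_nonneg fun s hs => hs.1.le
  -- Direction A : sInf S2 ≤ dGHp
  have hA : ∀ r ∈ S1, sInf (S2set p X Y) ≤ 2 ^ (-(1 / p)) * r := by
    rintro r ⟨R, hR, rfl⟩
    refine le_of_forall_pos_le_add ?_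
    intro ε hε
    set δ : ℝ := ε * 2 ^ ((1:ℝ) / p) with hδ_def
    have hδ : 0 < δ := by positivity
    have hD : 0 < pDistortion p R + δ := by have := hdis0 R; linarith
    obtain ⟨r', hr', hle⟩ :=
      exists_S2_elem hp hX hY R hR hD (hkeyD R δ hδ)
    have h1 : sInf (S2set p X Y) ≤ r' := csInf_le ⟨0, hS2lb⟩ hr'
    have h2 : (2:ℝ) ^ (-(1 / p)) * (pDistortion p R + δ)
        = 2 ^ (-(1 / p)) * pDistortion p R + ε := by
      rw [mul_add, hδ_def]
      congr 1
      rw [mul_comm ε, ← mul_assoc, htwomul, one_mul]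
    linarith
  -- Direction B : dGHp ≤ every element of S2
  have hB : ∀ r ∈ S2set p X Y, dGHp p X Y ≤ r := by
    rintro r ⟨d, hd0, hdeq, hdsymm, hdtri, hdX, hdY, rfl⟩
    set T : Set ℝ := {s : ℝ | 0 < s ∧
        (∀ x : X, ∃ y : Y, d (Sum.inl x) (Sum.inr y) ≤ s) ∧
        (∀ y : Y, ∃ x : X, d (Sum.inl x) (Sum.inr y) ≤ s)} with hT_def
    -- T is nonempty
    have hTne : T.Nonempty := by
      set x0 := Classical.arbitrary X
      set y0 := Classical.arbitrary Y
      set K := d (Sum.inl x0) (Sum.inr y0) with hK_def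
      have hK0 : 0 ≤ K := hd0 _ _
      set s1 : ℝ := (CX ^ p + K ^ p + CY ^ p + 1) ^ (1 / p) with hs1_def
      have hbase : (0:ℝ) < CX ^ p + K ^ p + CY ^ p + 1 := by
        have := Real.rpow_nonneg hCX0 p
        have := Real.rpow_nonneg hK0 p
        have := Real.rpow_nonneg hCY0 p
        linarith
      have hs1 : 0 < s1 := Real.rpow_pos_of_pos hbase _
      have hs1p : s1 ^ p = CX ^ p + K ^ p + CY ^ p + 1 :=
        aux_rpow_inv_rpow hp hbase.le
      have hcov : ∀ (x : X) (y : Y),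
          d (Sum.inl x) (Sum.inr y0) ≤ s1 ∧ d (Sum.inl x0) (Sum.inr y) ≤ s1 := by
        intro x y
        constructor
        · refine aux_le_of_rpow_le hp (hd0 _ _) hs1.le ?_
          have t1 := hdtri (Sum.inl x) (Sum.inl x0) (Sum.inr y0)
          rw [hdX] at t1
          have hxx : dist x x0 ^ p ≤ CX ^ p := aux_rpow_le_rpow hp dist_nonneg (hCX _ _)
          have := Real.rpow_nonneg hCY0 p
          rw [hs1p]; linarith
        · refine aux_le_of_rpow_le hp (hd0 _ _) hs1.le ?_
          have t1 := hdtri (Sum.inl x0) (Sum.inr y0) (Sum.inr y)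
          rw [hdY] at t1
          have hyy : dist y0 y ^ p ≤ CY ^ p := aux_rpow_le_rpow hp dist_nonneg (hCY _ _)
          have := Real.rpow_nonneg hCX0 p
          rw [hs1p]; linarith
      exact ⟨s1, hs1, fun x => ⟨y0, (hcov x y0).1⟩, fun y => ⟨x0, (hcov x0 y).2⟩⟩
    refine le_csInf hTne ?_
    rintro s ⟨hs, hcov1, hcov2⟩
    -- the correspondence induced by s
    set Rs : Set (X × Y) := {ab : X × Y | d (Sum.inl ab.1) (Sum.inr ab.2) ≤ s} with hRs_def
    have hRscorr : IsCorrespondence Rs :=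
      ⟨fun x => hcov1 x, fun y => by obtain ⟨x, hx⟩ := hcov2 y; exact ⟨x, hx⟩⟩
    have hdisRs : pDistortion p Rs ≤ 2 ^ ((1:ℝ) / p) * s := by
      refine csSup_le ?_ ?_
      · obtain ⟨y, hy⟩ := hRscorr.1 (Classical.arbitrary X)
        exact ⟨_, ⟨_, hy, _, hy, rfl⟩⟩
      rintro r ⟨a, ha, b, hb, rfl⟩
      have hsp : ∀ u v, (u, v) ∈ Rs → d (Sum.inl u) (Sum.inr v) ^ p ≤ s ^ p :=
        fun u v huv => aux_rpow_le_rpow hp (hd0 _ _) huv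
      have ha' := hsp a.1 a.2 ha
      have hb' := hsp b.1 b.2 hb
      have u1 : dist a.1 b.1 ^ p ≤ s ^ p + dist a.2 b.2 ^ p + s ^ p := by
        have t1 := hdtri (Sum.inl a.1) (Sum.inr a.2) (Sum.inl b.1)
        have t2 := hdtri (Sum.inr a.2) (Sum.inr b.2) (Sum.inl b.1)
        rw [hdX] at t1
        rw [hdY] at t2
        have c1 : d (Sum.inr a.2) (Sum.inl b.1) = d (Sum.inl b.1) (Sum.inr a.2) :=
          hdsymm _ _
        have c2 : d (Sum.inr b.2) (Sum.inl b.1) = d (Sum.inl b.1) (Sum.inr b.2) :=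
          hdsymm _ _
        have c2p : d (Sum.inr b.2) (Sum.inl b.1) ^ p = d (Sum.inl b.1) (Sum.inr b.2) ^ p := by
          rw [hdsymm]
        linarith
      have u2 : dist a.2 b.2 ^ p ≤ s ^ p + dist a.1 b.1 ^ p + s ^ p := by
        have t1 := hdtri (Sum.inr a.2) (Sum.inl a.1) (Sum.inr b.2)
        have t2 := hdtri (Sum.inl a.1) (Sum.inl b.1) (Sum.inr b.2)
        rw [hdY] at t1
        rw [hdX] at t2
        have c1p : d (Sum.inr a.2) (Sum.inl a.1) ^ p = d (Sum.inl a.1) (Sum.inr a.2) ^ p := by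
          rw [hdsymm]
        linarith
      have habs2 : |dist a.1 b.1 ^ p - dist a.2 b.2 ^ p| ≤ 2 * s ^ p :=
        abs_le.mpr ⟨by linarith, by linarith⟩
      have : lambdaP p (dist a.1 b.1) (dist a.2 b.2) ≤ (2 * s ^ p) ^ (1 / p) :=
        Real.rpow_le_rpow (abs_nonneg _) habs2 (by positivity)
      have heq : ((2 : ℝ) * s ^ p) ^ (1 / p) = 2 ^ ((1:ℝ) / p) * s := by
        rw [Real.mul_rpow (by norm_num) (Real.rpow_nonneg hs.le _),
          aux_rpow_rpow_inv hp hs.le]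
      rwa [heq] at this
    have hdGH : dGHp p X Y = 2 ^ (-(1 / p)) * sInf S1 := rfl
    have hstep : sInf S1 ≤ 2 ^ ((1:ℝ) / p) * s :=
      le_trans (csInf_le ⟨0, hS1lb⟩ ⟨Rs, hRscorr, rfl⟩) hdisRs
    calc dGHp p X Y = 2 ^ (-(1 / p)) * sInf S1 := hdGH
      _ ≤ 2 ^ (-(1 / p)) * (2 ^ ((1:ℝ) / p) * s) :=
          mul_le_mul_of_nonneg_left hstep htwo.le
      _ = s := by rw [← mul_assoc, htwomul, one_mul]
  -- S2 is nonempty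
  have hS2ne : (S2set p X Y).Nonempty := by
    set D : ℝ := (CX ^ p + CY ^ p + 1) ^ (1 / p) with hD_def
    have hbase : (0:ℝ) < CX ^ p + CY ^ p + 1 := by
      have := Real.rpow_nonneg hCX0 p
      have := Real.rpow_nonneg hCY0 p
      linarith
    have hD : 0 < D := Real.rpow_pos_of_pos hbase _
    have hDp : D ^ p = CX ^ p + CY ^ p + 1 := aux_rpow_inv_rpow hp hbase.le
    have hkeyuniv : ∀ a ∈ (Set.univ : Set (X × Y)), ∀ b ∈ (Set.univ : Set (X × Y)),
        |dist a.1 b.1 ^ p - dist a.2 b.2 ^ p| ≤ D ^ p := by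
      rintro a - b -
      have h1 : dist a.1 b.1 ^ p ≤ CX ^ p := aux_rpow_le_rpow hp dist_nonneg (hCX _ _)
      have h2 : dist a.2 b.2 ^ p ≤ CY ^ p := aux_rpow_le_rpow hp dist_nonneg (hCY _ _)
      have h3 := Real.rpow_nonneg (dist_nonneg (x := a.1) (y := b.1)) p
      have h4 := Real.rpow_nonneg (dist_nonneg (x := a.2) (y := b.2)) p
      rw [hDp, abs_le]
      constructor <;> nlinarith
    obtain ⟨r, hr, -⟩ := exists_S2_elem hp hX hY Set.univ hunivcorr hD hkeyuniv
    exact ⟨r, hr⟩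
  -- combine
  refine le_antisymm (le_csInf hS2ne hB) ?_
  have htwomul' : (2:ℝ) ^ ((1:ℝ) / p) * 2 ^ (-(1 / p)) = 1 := by
    rw [← Real.rpow_add two_pos]; simp
  have hstep : 2 ^ ((1:ℝ) / p) * sInf (S2set p X Y) ≤ sInf S1 := by
    refine le_csInf hS1ne ?_
    intro r hr
    calc 2 ^ ((1:ℝ) / p) * sInf (S2set p X Y)
        ≤ 2 ^ ((1:ℝ) / p) * (2 ^ (-(1 / p)) * r) :=
          mul_le_mul_of_nonneg_left (hA r hr) htwo'.le
      _ = r := by rw [← mul_assoc, htwomul', one_mul]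
  have hdGH : dGHp p X Y = 2 ^ (-(1 / p)) * sInf S1 := rfl
  calc sInf (S2set p X Y)
      = 2 ^ (-(1 / p)) * (2 ^ ((1:ℝ) / p) * sInf (S2set p X Y)) := by
        rw [← mul_assoc, htwomul, one_mul]
    _ ≤ 2 ^ (-(1 / p)) * sInf S1 := mul_le_mul_of_nonneg_left hstep htwo.le
    _ = dGHp p X Y := hdGH.symm

end MainProof

/-- For compact `p`-metric spaces, `d_GH^{(p)}(X,Y)` equals the infimum, over all
`p`-metrics `d` on the disjoint union `X ⊕ Y` restricting to `d_X` and `d_Y`, of the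
Hausdorff distance (computed in `(X ⊕ Y, d)`) between the copies of `X` and `Y`. -/
theorem dGHp_eq_inf_hausdorff_on_sum (p : ℝ) (hp : 1 ≤ p)
    (X Y : Type) [MetricSpace X] [CompactSpace X] [Nonempty X]
    [MetricSpace Y] [CompactSpace Y] [Nonempty Y]
    (hX : ∀ x y z : X, dist x z ^ p ≤ dist x y ^ p + dist y z ^ p)
    (hY : ∀ x y z : Y, dist x z ^ p ≤ dist x y ^ p + dist y z ^ p) :
    dGHp p X Y =
      sInf {r : ℝ | ∃ d : X ⊕ Y → X ⊕ Y → ℝ,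
        (∀ a b, 0 ≤ d a b) ∧
        (∀ a b, d a b = 0 ↔ a = b) ∧
        (∀ a b, d a b = d b a) ∧
        (∀ a b c, d a c ^ p ≤ d a b ^ p + d b c ^ p) ∧
        (∀ x x' : X, d (Sum.inl x) (Sum.inl x') = dist x x') ∧
        (∀ y y' : Y, d (Sum.inr y) (Sum.inr y') = dist y y') ∧
        r = sInf {s : ℝ | 0 < s ∧
              (∀ x : X, ∃ y : Y, d (Sum.inl x) (Sum.inr y) ≤ s) ∧
              (∀ y : Y, ∃ x : X, d (Sum.inl x) (Sum.inr y) ≤ s)}} :=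
  dGHp_eq_S2 hp hX hY
end
end

section
/- Let p ∈ [1,∞) and let X, Y be nonempty compact metric spaces. Then d_GH^{(p)}(X,Y) = 2^{−1/p} · inf over all pairs of maps φ : X → Y and ψ : Y → X of max( dis_p(φ), dis_p(ψ), codis_p(φ,ψ) ), where dis_p(φ) := sup_{x,x'∈X} Λ_p(d_X(x,x'), d_Y(φ(x),φ(x'))), dis_p(ψ) := sup_{y,y'∈Y} Λ_p(d_Y(y,y'), d_X(ψ(y),ψ(y'))), and codis_p(φ,ψ) := sup_{x∈X, y∈Y} Λ_p(d_X(x,ψ(y)), d_Y(φ(x),y)). -/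
noncomputable section
set_option linter.unusedSectionVars false

/-- The `p`-distortion of a map between metric spaces. -/
def mapDisP {X Y : Type*} [MetricSpace X] [MetricSpace Y] (p : ℝ) (φ : X → Y) : ℝ :=
  ⨆ x : X, ⨆ x' : X, lambdaP p (dist x x') (dist (φ x) (φ x'))

/-- The `p`-codistortion of a pair of maps between metric spaces. -/
def mapCodisP {X Y : Type*} [MetricSpace X] [MetricSpace Y] (p : ℝ)
    (φ : X → Y) (ψ : Y → X) : ℝ :=
  ⨆ x : X, ⨆ y : Y, lambdaP p (dist x (ψ y)) (dist (φ x) y)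

lemma lambdaP_le {p a b D : ℝ} (hp : 1 ≤ p) (ha : 0 ≤ a) (hb : 0 ≤ b)
    (hD : 0 ≤ D) (haD : a ≤ D) (hbD : b ≤ D) : lambdaP p a b ≤ D := by
  have hp0 : (0:ℝ) < p := lt_of_lt_of_le one_pos hp
  have h1 : |a ^ p - b ^ p| ≤ D ^ p := by
    have haD' : a ^ p ≤ D ^ p := Real.rpow_le_rpow ha haD hp0.le
    have hbD' : b ^ p ≤ D ^ p := Real.rpow_le_rpow hb hbD hp0.le
    have ha' : 0 ≤ a ^ p := Real.rpow_nonneg ha _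
    have hb' : 0 ≤ b ^ p := Real.rpow_nonneg hb _
    rw [abs_le]; constructor <;> linarith
  calc |a ^ p - b ^ p| ^ (1/p) ≤ (D ^ p) ^ (1/p) :=
        Real.rpow_le_rpow (abs_nonneg _) h1 (by positivity)
    _ = D := by
        rw [← Real.rpow_mul hD, mul_one_div_cancel hp0.ne', Real.rpow_one]

section Main

variable (p : ℝ) (hp : 1 ≤ p)
variable (X Y : Type) [MetricSpace X] [CompactSpace X] [Nonempty X]
  [MetricSpace Y] [CompactSpace Y] [Nonempty Y]

/-- Uniform bound on distances. -/
def DD : ℝ := max (Metric.diam (Set.univ : Set X)) (Metric.diam (Set.univ : Set Y))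

lemma DD_nonneg : 0 ≤ DD X Y :=
  le_trans Metric.diam_nonneg (le_max_left _ _)

lemma distX_le_DD (x x' : X) : dist x x' ≤ DD X Y :=
  le_trans (Metric.dist_le_diam_of_mem isCompact_univ.isBounded (Set.mem_univ x)
    (Set.mem_univ x')) (le_max_left _ _)

lemma distY_le_DD (y y' : Y) : dist y y' ≤ DD X Y :=
  le_trans (Metric.dist_le_diam_of_mem isCompact_univ.isBounded (Set.mem_univ y)
    (Set.mem_univ y')) (le_max_right _ _)

include hp

lemma lambdaP_dist_le (x x' : X) (y y' : Y) :
    lambdaP p (dist x x') (dist y y') ≤ DD X Y :=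
  lambdaP_le hp dist_nonneg dist_nonneg (DD_nonneg X Y)
    (distX_le_DD X Y x x') (distY_le_DD X Y y y')

lemma mapDisP_le_pDistortion {R : Set (X × Y)} (hR : IsCorrespondence R)
    (φ : X → Y) (hφ : ∀ x, (x, φ x) ∈ R) : mapDisP p φ ≤ pDistortion p R := by
  have hnn : 0 ≤ pDistortion p R :=
    Real.sSup_nonneg (by rintro r ⟨a, _, b, _, rfl⟩; exact lambdaP_nonneg _ _ _)
  refine Real.iSup_le (fun x => Real.iSup_le (fun x' => ?_) hnn) hnn
  refine le_csSup ⟨DD X Y, ?_⟩ ⟨(x, φ x), hφ x, (x', φ x'), hφ x', rfl⟩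
  rintro r ⟨a, _, b, _, rfl⟩
  exact lambdaP_dist_le p hp X Y _ _ _ _

lemma flip_mapDisP_le_pDistortion {R : Set (X × Y)} (hR : IsCorrespondence R)
    (ψ : Y → X) (hψ : ∀ y, (ψ y, y) ∈ R) : mapDisP p ψ ≤ pDistortion p R := by
  have hnn : 0 ≤ pDistortion p R :=
    Real.sSup_nonneg (by rintro r ⟨a, _, b, _, rfl⟩; exact lambdaP_nonneg _ _ _)
  refine Real.iSup_le (fun y => Real.iSup_le (fun y' => ?_) hnn) hnn
  rw [lambdaP_comm]
  refine le_csSup ⟨DD X Y, ?_⟩ ⟨(ψ y, y), hψ y, (ψ y', y'), hψ y', rfl⟩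
  rintro r ⟨a, _, b, _, rfl⟩
  exact lambdaP_dist_le p hp X Y _ _ _ _

lemma mapCodisP_le_pDistortion {R : Set (X × Y)} (hR : IsCorrespondence R)
    (φ : X → Y) (hφ : ∀ x, (x, φ x) ∈ R)
    (ψ : Y → X) (hψ : ∀ y, (ψ y, y) ∈ R) : mapCodisP p φ ψ ≤ pDistortion p R := by
  have hnn : 0 ≤ pDistortion p R :=
    Real.sSup_nonneg (by rintro r ⟨a, _, b, _, rfl⟩; exact lambdaP_nonneg _ _ _)
  refine Real.iSup_le (fun x => Real.iSup_le (fun y => ?_) hnn) hnn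
  refine le_csSup ⟨DD X Y, ?_⟩ ⟨(x, φ x), hφ x, (ψ y, y), hψ y, rfl⟩
  rintro r ⟨a, _, b, _, rfl⟩
  exact lambdaP_dist_le p hp X Y _ _ _ _

/-- Given maps, the distortion of the associated correspondence is at most the max. -/
lemma pDistortion_union_le (φ : X → Y) (ψ : Y → X) :
    pDistortion p ({q : X × Y | q.2 = φ q.1} ∪ {q : X × Y | q.1 = ψ q.2}) ≤
      max (max (mapDisP p φ) (mapDisP p ψ)) (mapCodisP p φ ψ) := by
  set M := max (max (mapDisP p φ) (mapDisP p ψ)) (mapCodisP p φ ψ) with hM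
  have hdis : ∀ (Z W : Type) [MetricSpace Z] [MetricSpace W] [CompactSpace Z]
      [CompactSpace W] [Nonempty Z] [Nonempty W] (f : Z → W) (z z' : Z),
      lambdaP p (dist z z') (dist (f z) (f z')) ≤ mapDisP p f := by
    intro Z W _ _ _ _ _ _ f z z'
    have hb1 : ∀ z : Z, BddAbove (Set.range fun z' =>
        lambdaP p (dist z z') (dist (f z) (f z'))) := fun z =>
      ⟨DD Z W, by rintro r ⟨z', rfl⟩; exact lambdaP_dist_le p hp Z W _ _ _ _⟩
    have hb2 : BddAbove (Set.range fun z => ⨆ z',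
        lambdaP p (dist z z') (dist (f z) (f z'))) := by
      refine ⟨DD Z W, ?_⟩
      rintro r ⟨z, rfl⟩
      exact Real.iSup_le (fun z' => lambdaP_dist_le p hp Z W _ _ _ _) (DD_nonneg Z W)
    exact le_trans (le_ciSup (hb1 z) z') (le_ciSup hb2 z)
  have hcod : ∀ (x : X) (y : Y),
      lambdaP p (dist x (ψ y)) (dist (φ x) y) ≤ mapCodisP p φ ψ := by
    intro x y
    have hb1 : ∀ x : X, BddAbove (Set.range fun y =>
        lambdaP p (dist x (ψ y)) (dist (φ x) y)) := fun x =>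
      ⟨DD X Y, by rintro r ⟨y, rfl⟩; exact lambdaP_dist_le p hp X Y _ _ _ _⟩
    have hb2 : BddAbove (Set.range fun x => ⨆ y,
        lambdaP p (dist x (ψ y)) (dist (φ x) y)) := by
      refine ⟨DD X Y, ?_⟩
      rintro r ⟨x, rfl⟩
      exact Real.iSup_le (fun y => lambdaP_dist_le p hp X Y _ _ _ _) (DD_nonneg X Y)
    exact le_trans (le_ciSup (hb1 x) y) (le_ciSup hb2 x)
  have hMnn : 0 ≤ M := le_trans
    (Real.iSup_nonneg fun x => Real.iSup_nonneg fun y => lambdaP_nonneg _ _ _)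
    (le_max_right _ _)
  refine Real.sSup_le ?_ hMnn
  rintro r ⟨a, ha, b, hb, rfl⟩
  rcases ha with ha | ha <;> rcases hb with hb | hb
  · -- both on graph of φ
    rw [ha, hb]
    exact le_trans (hdis X Y φ a.1 b.1) (le_trans (le_max_left _ _) (le_max_left _ _))
  · -- a on graph φ, b on graph ψ
    rw [ha, hb]
    exact le_trans (hcod a.1 b.2) (le_max_right _ _)
  · -- a on graph ψ, b on graph φ
    rw [ha, hb, dist_comm (ψ a.2) b.1, dist_comm a.2 (φ b.1)]
    exact le_trans (hcod b.1 a.2) (le_max_right _ _)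
  · -- both on graph of ψ
    rw [ha, hb, lambdaP_comm]
    exact le_trans (hdis Y X ψ a.2 b.2)
      (le_trans (le_max_right _ _) (le_max_left _ _))

end Main

/-- Kalton–Ostrovskii type formula for `d_GH^{(p)}`: it equals
`2^(-1/p) · inf_{φ,ψ} max(dis_p(φ), dis_p(ψ), codis_p(φ,ψ))`. -/
theorem dGHp_eq_inf_maps (p : ℝ) (hp : 1 ≤ p)
    (X Y : Type) [MetricSpace X] [CompactSpace X] [Nonempty X]
    [MetricSpace Y] [CompactSpace Y] [Nonempty Y] :
    dGHp p X Y =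
      (2 : ℝ) ^ (-(1 / p)) *
        ⨅ φ : X → Y, ⨅ ψ : Y → X,
          max (max (mapDisP p φ) (mapDisP p ψ)) (mapCodisP p φ ψ) := by
  unfold dGHp
  congr 1
  set S := {r : ℝ | ∃ R : Set (X × Y), IsCorrespondence R ∧ r = pDistortion p R} with hS
  have hSne : S.Nonempty := by
    refine ⟨pDistortion p (Set.univ : Set (X × Y)), Set.univ, ⟨?_, ?_⟩, rfl⟩
    · exact fun x => ⟨Classical.arbitrary Y, trivial⟩
    · exact fun y => ⟨Classical.arbitrary X, trivial⟩
  have hSnn : ∀ r ∈ S, 0 ≤ r := by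
    rintro r ⟨R, hR, rfl⟩
    exact Real.sSup_nonneg (by rintro r ⟨a, _, b, _, rfl⟩; exact lambdaP_nonneg _ _ _)
  have hInn : ∀ φ : X → Y, ∀ ψ : Y → X,
      (0:ℝ) ≤ max (max (mapDisP p φ) (mapDisP p ψ)) (mapCodisP p φ ψ) := fun φ ψ =>
    le_trans (Real.iSup_nonneg fun x => Real.iSup_nonneg fun y => lambdaP_nonneg _ _ _)
      (le_max_right _ _)
  apply le_antisymm
  · -- sInf S ≤ iInf
    refine le_ciInf fun φ => le_ciInf fun ψ => ?_
    have hmem : pDistortion p ({q : X × Y | q.2 = φ q.1} ∪ {q : X × Y | q.1 = ψ q.2}) ∈ S := by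
      refine ⟨_, ⟨fun x => ⟨φ x, Or.inl rfl⟩, fun y => ⟨ψ y, Or.inr rfl⟩⟩, rfl⟩
    exact le_trans (csInf_le ⟨0, hSnn⟩ hmem) (pDistortion_union_le p hp X Y φ ψ)
  · -- iInf ≤ sInf S
    refine le_csInf hSne ?_
    rintro r ⟨R, hR, rfl⟩
    set φ : X → Y := fun x => (hR.1 x).choose with hφdef
    have hφ : ∀ x, (x, φ x) ∈ R := fun x => (hR.1 x).choose_spec
    set ψ : Y → X := fun y => (hR.2 y).choose with hψdef
    have hψ : ∀ y, (ψ y, y) ∈ R := fun y => (hR.2 y).choose_spec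
    have hmax : max (max (mapDisP p φ) (mapDisP p ψ)) (mapCodisP p φ ψ) ≤
        pDistortion p R :=
      max_le (max_le (mapDisP_le_pDistortion p hp X Y hR φ hφ)
          (flip_mapDisP_le_pDistortion p hp X Y hR ψ hψ))
        (mapCodisP_le_pDistortion p hp X Y hR φ hφ ψ hψ)
    have hb2 : BddBelow (Set.range fun ψ : Y → X =>
        max (max (mapDisP p φ) (mapDisP p ψ)) (mapCodisP p φ ψ)) :=
      ⟨0, by rintro r ⟨ψ', rfl⟩; exact hInn φ ψ'⟩
    have hb1 : BddBelow (Set.range fun φ : X → Y => ⨅ ψ : Y → X,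
        max (max (mapDisP p φ) (mapDisP p ψ)) (mapCodisP p φ ψ)) :=
      ⟨0, by rintro r ⟨φ', rfl⟩; exact le_ciInf fun ψ' => hInn φ' ψ'⟩
    exact le_trans (ciInf_le_of_le hb1 φ (ciInf_le hb2 ψ)) hmax
end
end

section
/- Let (X,u_X) and (Y,u_Y) be nonempty compact ultrametric spaces. Then u_GH(X,Y) equals the minimum of the set of all t ≥ 0 for which there exists a map f : X → Y such that: (i) for all x,x' ∈ X, u_X(x,x') ≤ t if and only if u_Y(f(x),f(x')) ≤ t; (ii) for all x,x' ∈ X with u_X(x,x') > t one has u_Y(f(x),f(x')) = u_X(x,x'); and (iii) for every y ∈ Y there exists x ∈ X with u_Y(f(x),y) ≤ t. In particular this minimum is attained. -/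
noncomputable section

/-- `Λ_∞(a,b) := max(a,b)` if `a ≠ b`, and `0` if `a = b`. -/
def lambdaInf (a b : ℝ) : ℝ := if a = b then 0 else max a b

/-- The `∞`-distortion of a correspondence between two metric spaces. -/
def infDistortion {X Y : Type*} [MetricSpace X] [MetricSpace Y]
    (R : Set (X × Y)) : ℝ :=
  sSup {r : ℝ | ∃ a ∈ R, ∃ b ∈ R, r = lambdaInf (dist a.1 b.1) (dist a.2 b.2)}

/-- The Gromov–Hausdorff ultrametric `u_GH(X,Y) := inf_R dis_∞(R)`. -/
def uGH (X Y : Type) [MetricSpace X] [MetricSpace Y] : ℝ :=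
  sInf {r : ℝ | ∃ R : Set (X × Y), IsCorrespondence R ∧ r = infDistortion R}

lemma lambdaInf_le_iff {a b t : ℝ} (ht : 0 ≤ t) :
    lambdaInf a b ≤ t ↔ (a = b ∨ (a ≤ t ∧ b ≤ t)) := by
  unfold lambdaInf
  split_ifs with h
  · simp [h, ht]
  · rw [max_le_iff]
    exact ⟨fun hh => Or.inr hh, fun hh => hh.resolve_left h⟩

lemma ultra_isoceles {Z : Type*} [MetricSpace Z]
    (hZ : ∀ x y z : Z, dist x z ≤ max (dist x y) (dist y z))
    {t : ℝ} {a b a' b' : Z} (hab : t < dist a b)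
    (ha : dist a a' ≤ t) (hb : dist b b' ≤ t) : dist a' b' = dist a b := by
  have h1 : dist a' b' ≤ dist a b := by
    calc dist a' b' ≤ max (dist a' a) (dist a b') := hZ a' a b'
      _ ≤ max (dist a' a) (max (dist a b) (dist b b')) := max_le_max le_rfl (hZ a b b')
      _ ≤ dist a b := by
          rw [dist_comm a' a]
          exact max_le (ha.trans hab.le) (max_le le_rfl (hb.trans hab.le))
  have h2 : dist a b ≤ dist a' b' := by
    by_contra hc
    push_neg at hc
    have key : dist a b ≤ max (dist a a') (max (dist a' b') (dist b' b)) :=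
      le_trans (hZ a a' b) (max_le_max le_rfl (hZ a' b' b))
    have hbb : dist b' b ≤ t := by rw [dist_comm]; exact hb
    have hlt : max (dist a a') (max (dist a' b') (dist b' b)) < dist a b :=
      max_lt (ha.trans_lt hab) (max_lt hc (hbb.trans_lt hab))
    exact absurd (key.trans_lt hlt) (lt_irrefl _)
  linarith

lemma bddAbove_disSet {X Y : Type*} [MetricSpace X] [CompactSpace X]
    [MetricSpace Y] [CompactSpace Y] (R : Set (X × Y)) :
    BddAbove {r : ℝ | ∃ a ∈ R, ∃ b ∈ R, r = lambdaInf (dist a.1 b.1) (dist a.2 b.2)} := by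
  obtain ⟨Cx, hCx⟩ := Metric.isBounded_iff.1 (isCompact_univ : IsCompact (Set.univ : Set X)).isBounded
  obtain ⟨Cy, hCy⟩ := Metric.isBounded_iff.1 (isCompact_univ : IsCompact (Set.univ : Set Y)).isBounded
  refine ⟨max (max Cx Cy) 0, ?_⟩
  rintro r ⟨p, hp, q, hq, rfl⟩
  unfold lambdaInf
  split_ifs with h
  · exact le_max_right _ _
  · exact le_trans (max_le_max (hCx trivial trivial) (hCy trivial trivial)) (le_max_left _ _)

lemma infDistortion_nonneg {X Y : Type*} [MetricSpace X] [CompactSpace X] [Nonempty X]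
    [MetricSpace Y] [CompactSpace Y] (R : Set (X × Y)) (hR : IsCorrespondence R) :
    0 ≤ infDistortion R := by
  obtain ⟨y, hy⟩ := hR.1 (Classical.arbitrary X)
  exact le_csSup (bddAbove_disSet R)
    ⟨_, hy, _, hy, by simp [lambdaInf]⟩

lemma mem_S_of_corr {X Y : Type*} [MetricSpace X] [CompactSpace X]
    [MetricSpace Y] [CompactSpace Y]
    {t : ℝ} (ht : 0 ≤ t) {R : Set (X × Y)} (hR : IsCorrespondence R)
    (hdis : infDistortion R ≤ t) :
    ∃ f : X → Y,
      (∀ x x' : X, dist x x' ≤ t ↔ dist (f x) (f x') ≤ t) ∧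
      (∀ x x' : X, t < dist x x' → dist (f x) (f x') = dist x x') ∧
      (∀ y : Y, ∃ x : X, dist (f x) y ≤ t) := by
  have pair : ∀ p ∈ R, ∀ q ∈ R,
      lambdaInf (dist (Prod.fst p) (Prod.fst q)) (dist p.2 q.2) ≤ t := fun p hp q hq =>
    le_trans (le_csSup (bddAbove_disSet R) ⟨p, hp, q, hq, rfl⟩) hdis
  set f : X → Y := fun x => (hR.1 x).choose with hf
  have hfR : ∀ x, (x, f x) ∈ R := fun x => (hR.1 x).choose_spec
  have key : ∀ x x' : X, dist x x' = dist (f x) (f x') ∨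
      (dist x x' ≤ t ∧ dist (f x) (f x') ≤ t) := fun x x' =>
    (lambdaInf_le_iff ht).1 (pair _ (hfR x) _ (hfR x'))
  refine ⟨f, ?_, ?_, ?_⟩
  · intro x x'
    rcases key x x' with h | h
    · rw [h]
    · exact ⟨fun _ => h.2, fun _ => h.1⟩
  · intro x x' hlt
    rcases key x x' with h | h
    · exact h.symm
    · exact absurd h.1 (not_le.2 hlt)
  · intro y
    obtain ⟨x, hx⟩ := hR.2 y
    have := (lambdaInf_le_iff ht).1 (pair _ (hfR x) _ hx)
    rw [dist_self] at this
    rcases this with h | h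
    · exact ⟨x, h ▸ ht⟩
    · exact ⟨x, h.2⟩

lemma corr_of_mem {X Y : Type*} [MetricSpace X] [CompactSpace X]
    [MetricSpace Y] [CompactSpace Y]
    (hY : ∀ x y z : Y, dist x z ≤ max (dist x y) (dist y z))
    {t : ℝ} (ht : 0 ≤ t) {f : X → Y}
    (h1 : ∀ x x' : X, dist x x' ≤ t ↔ dist (f x) (f x') ≤ t)
    (h2 : ∀ x x' : X, t < dist x x' → dist (f x) (f x') = dist x x')
    (h3 : ∀ y : Y, ∃ x : X, dist (f x) y ≤ t) :
    ∃ R : Set (X × Y), IsCorrespondence R ∧ infDistortion R ≤ t := by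
  refine ⟨{p | dist (f p.1) p.2 ≤ t}, ⟨fun x => ⟨f x, by simp [ht]⟩, fun y => h3 y⟩, ?_⟩
  apply Real.sSup_le _ ht
  rintro r ⟨⟨x, y⟩, hxy, ⟨x', y'⟩, hxy', rfl⟩
  simp only [Set.mem_setOf_eq] at hxy hxy'
  rw [lambdaInf_le_iff ht]
  by_cases heq : dist x x' = dist y y'
  · exact Or.inl heq
  · right
    have hxx : dist x x' ≤ t := by
      by_contra hc
      push_neg at hc
      have hff : dist (f x) (f x') = dist x x' := h2 x x' hc
      have hiso : dist y y' = dist (f x) (f x') :=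
        ultra_isoceles hY (t := t) (hff ▸ hc) hxy hxy'
      exact heq (by rw [hiso, hff])
    have hffle : dist (f x) (f x') ≤ t := (h1 x x').1 hxx
    have hyy : dist y y' ≤ t := by
      calc dist y y' ≤ max (dist y (f x)) (dist (f x) y') := hY y (f x) y'
        _ ≤ max (dist y (f x)) (max (dist (f x) (f x')) (dist (f x') y')) :=
            max_le_max le_rfl (hY (f x) (f x') y')
        _ ≤ t := max_le (by rw [dist_comm]; exact hxy) (max_le hffle hxy')
    exact ⟨hxx, hyy⟩

lemma spectrum_finite (Z : Type*) [MetricSpace Z] [CompactSpace Z]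
    (hZ : ∀ x y z : Z, dist x z ≤ max (dist x y) (dist y z))
    {a : ℝ} (ha : 0 < a) :
    {r : ℝ | a ≤ r ∧ ∃ z z' : Z, dist z z' = r}.Finite := by
  set K : Set (Z × Z) := {p | a ≤ dist p.1 p.2} with hK
  have hKcl : IsClosed K := isClosed_le continuous_const continuous_dist
  have hKc : IsCompact K := hKcl.isCompact
  set U : Z × Z → Set (Z × Z) := fun p => {q | dist q.1 p.1 < a} ∩ {q | dist q.2 p.2 < a} with hU
  have hUopen : ∀ p, IsOpen (U p) := fun p =>
    (isOpen_lt (continuous_fst.dist continuous_const) continuous_const).inter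
      (isOpen_lt (continuous_snd.dist continuous_const) continuous_const)
  have hcover : K ⊆ ⋃ p, U p := fun p _ =>
    Set.mem_iUnion.2 ⟨p, by simp [hU, ha]⟩
  obtain ⟨s, hs⟩ := hKc.elim_finite_subcover U hUopen hcover
  apply Set.Finite.subset (s.finite_toSet.image (fun p => dist p.1 p.2))
  rintro r ⟨har, z, z', rfl⟩
  have hzK : (z, z') ∈ K := har
  have := hs hzK
  simp only [Set.mem_iUnion, Set.mem_inter_iff, Set.mem_setOf_eq] at this
  obtain ⟨p, hps, hp1, hp2⟩ := this
  refine ⟨p, hps, ?_⟩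
  exact ultra_isoceles hZ (t := max (dist z p.1) (dist z' p.2))
    (max_lt (hp1.trans_le har) (hp2.trans_le har)) (le_max_left _ _) (le_max_right _ _)
/-- Structural theorem for `u_GH`: for nonempty compact ultrametric spaces `X`, `Y`,
`u_GH(X,Y)` is the least `t ≥ 0` such that some map `f : X → Y` induces an isometry
between the `t`-closed quotients of `X` and `Y`; in particular this minimum is attained. -/
theorem uGH_structure (X Y : Type)
    [MetricSpace X] [CompactSpace X] [Nonempty X]
    [MetricSpace Y] [CompactSpace Y] [Nonempty Y]
    (hX : ∀ x y z : X, dist x z ≤ max (dist x y) (dist y z))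
    (hY : ∀ x y z : Y, dist x z ≤ max (dist x y) (dist y z)) :
    IsLeast {t : ℝ | 0 ≤ t ∧ ∃ f : X → Y,
        (∀ x x' : X, dist x x' ≤ t ↔ dist (f x) (f x') ≤ t) ∧
        (∀ x x' : X, t < dist x x' → dist (f x) (f x') = dist x x') ∧
        (∀ y : Y, ∃ x : X, dist (f x) y ≤ t)}
      (uGH X Y) := by
  set G : Set ℝ := {r : ℝ | ∃ R : Set (X × Y), IsCorrespondence R ∧ r = infDistortion R} with hG
  have hGne : G.Nonempty := by
    refine ⟨infDistortion (Set.univ : Set (X × Y)), Set.univ, ⟨?_, ?_⟩, rfl⟩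
    · exact fun x => ⟨Classical.arbitrary Y, trivial⟩
    · exact fun y => ⟨Classical.arbitrary X, trivial⟩
  have hGbdd : BddBelow G := by
    refine ⟨0, ?_⟩
    rintro r ⟨R, hR, rfl⟩
    exact infDistortion_nonneg R hR
  have hδ0 : 0 ≤ uGH X Y := le_csInf hGne (by rintro r ⟨R, hR, rfl⟩; exact infDistortion_nonneg R hR)
  -- any t > uGH X Y admits a map f
  have hgt : ∀ t : ℝ, uGH X Y < t → ∃ f : X → Y,
      (∀ x x' : X, dist x x' ≤ t ↔ dist (f x) (f x') ≤ t) ∧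
      (∀ x x' : X, t < dist x x' → dist (f x) (f x') = dist x x') ∧
      (∀ y : Y, ∃ x : X, dist (f x) y ≤ t) := by
    intro t htgt
    obtain ⟨r, hrmem, hrlt⟩ := exists_lt_of_csInf_lt hGne htgt
    obtain ⟨R, hR, rfl⟩ := hrmem
    exact mem_S_of_corr (hδ0.trans htgt.le) hR hrlt.le
  constructor
  · -- membership
    rcases hδ0.lt_or_eq with hpos | heq
    · -- positive case: use spectral gap above uGH X Y
      have hgap : ∃ t : ℝ, uGH X Y < t ∧
          (∀ x x' : X, uGH X Y < dist x x' → t < dist x x') ∧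
          (∀ y y' : Y, uGH X Y < dist y y' → t < dist y y') := by
        set F : Set ℝ := {r : ℝ | uGH X Y < r ∧
            ((∃ z z' : X, dist z z' = r) ∨ (∃ z z' : Y, dist z z' = r))} with hF
        have hFfin : F.Finite := by
          apply Set.Finite.subset ((spectrum_finite X hX hpos).union (spectrum_finite Y hY hpos))
          rintro r ⟨hr, h | h⟩
          · exact Or.inl ⟨hr.le, h⟩
          · exact Or.inr ⟨hr.le, h⟩
        by_cases hFne : F.Nonempty
        · have hmem := hFne.csInf_mem hFfin
          have hmlt : uGH X Y < sInf F := hmem.1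
          refine ⟨uGH X Y + (sInf F - uGH X Y) / 2, by linarith, ?_, ?_⟩
          · intro x x' hlt
            have : sInf F ≤ dist x x' := csInf_le hFfin.bddBelow ⟨hlt, Or.inl ⟨x, x', rfl⟩⟩
            linarith
          · intro y y' hlt
            have : sInf F ≤ dist y y' := csInf_le hFfin.bddBelow ⟨hlt, Or.inr ⟨y, y', rfl⟩⟩
            linarith
        · refine ⟨uGH X Y + 1, by linarith, ?_, ?_⟩
          · intro x x' hlt
            exact absurd ⟨hlt, Or.inl ⟨x, x', rfl⟩⟩ (fun h => hFne ⟨_, h⟩)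
          · intro y y' hlt
            exact absurd ⟨hlt, Or.inr ⟨y, y', rfl⟩⟩ (fun h => hFne ⟨_, h⟩)
      obtain ⟨t, htδ, gapX, gapY⟩ := hgap
      obtain ⟨f, h1, h2, h3⟩ := hgt t htδ
      refine ⟨hδ0, f, ?_, ?_, ?_⟩
      · intro x x'
        constructor
        · intro h
          by_contra hc
          push_neg at hc
          have := gapY _ _ hc
          have hle : dist (f x) (f x') ≤ t := (h1 x x').1 (h.trans htδ.le)
          linarith
        · intro h
          by_contra hc
          push_neg at hc
          have := gapX _ _ hc
          have hle : dist x x' ≤ t := (h1 x x').2 (h.trans htδ.le)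
          linarith
      · intro x x' hlt
        exact h2 x x' (gapX _ _ hlt)
      · intro y
        obtain ⟨x, hx⟩ := h3 y
        refine ⟨x, ?_⟩
        by_contra hc
        push_neg at hc
        have := gapY _ _ hc
        linarith
    · -- zero case: the spaces are isometric
      have hgh : GromovHausdorff.ghDist X Y = 0 := by
        have hb : ∀ ε : ℝ, 0 < ε → GromovHausdorff.ghDist X Y ≤ 0 + ε / 2 + ε := by
          intro ε hε
          obtain ⟨f, h1, h2, h3⟩ := hgt ε (heq ▸ hε)
          refine GromovHausdorff.ghDist_le_of_approx_subsets
            (s := (Set.univ : Set X)) (fun p => f p.1) ?_ ?_ ?_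
          · exact fun x => ⟨x, trivial, by simp⟩
          · intro yy
            obtain ⟨x, hx⟩ := h3 yy
            exact ⟨⟨x, trivial⟩, by rw [dist_comm]; exact hx⟩
          · intro p q
            rw [Subtype.dist_eq]
            by_cases hle : dist (p : X) (q : X) ≤ ε
            · have hble : dist (f (p : X)) (f (q : X)) ≤ ε := (h1 _ _).1 hle
              have d1 : (0:ℝ) ≤ dist (p : X) (q : X) := dist_nonneg
              have d2 : (0:ℝ) ≤ dist (f (p : X)) (f (q : X)) := dist_nonneg
              rw [abs_le]
              constructor <;> linarith
            · push_neg at hle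
              rw [h2 _ _ hle, sub_self, abs_zero]
              exact hε.le
        have hle0 : GromovHausdorff.ghDist X Y ≤ 0 := by
          refine le_of_forall_pos_le_add ?_
          intro ε hε
          have := hb (ε / 2) (by linarith)
          linarith
        have hge0 : 0 ≤ GromovHausdorff.ghDist X Y := dist_nonneg
        linarith
      have hiso : Nonempty (X ≃ᵢ Y) := by
        rw [← GromovHausdorff.toGHSpace_eq_toGHSpace_iff_isometryEquiv]
        exact dist_eq_zero.1 hgh
      obtain ⟨e⟩ := hiso
      refine ⟨hδ0, e, ?_, ?_, ?_⟩
      · intro x x'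
        rw [e.dist_eq]
      · intro x x' _
        rw [e.dist_eq]
      · intro y
        refine ⟨e.symm y, ?_⟩
        rw [e.apply_symm_apply, dist_self]
        exact hδ0
  · -- lower bound
    rintro t ⟨ht0, f, h1, h2, h3⟩
    obtain ⟨R, hR, hdis⟩ := corr_of_mem hY ht0 h1 h2 h3
    exact (csInf_le hGbdd ⟨R, hR, rfl⟩).trans hdis
end
end

section
/- Let X be a compact ultrametric space and let A, B be nonempty closed subsets of X. Then the Hausdorff distance between A and B equals the minimum of the set { t ≥ 0 : A^t = B^t }, where A^t := { x ∈ X : dist(x,A) ≤ t } is the closed t-neighborhood of A; in particular this minimum is attained. -/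
/-!
In an ultrametric space `infDist x T ≤ max (infDist x S) (hausdorffDist S T)`: the triangle
inequality for `max` survives taking infima. Hence as soon as `t ≥ hausdorffDist A B`, the closed
`t`-neighbourhoods of `A` and `B` contain each other. Conversely, in any metric space, equal closed
`t`-neighbourhoods force `A ⊆ B^t` and `B ⊆ A^t`, i.e. `hausdorffDist A B ≤ t`.
-/

open Metric

namespace Metric

variable {X : Type*} [PseudoMetricSpace X] {s t : Set X} {r : ℝ}

theorem hausdorffDist_le_of_setOf_infDist_le_eq (hr : 0 ≤ r)
    (h : {x | infDist x s ≤ r} = {x | infDist x t ≤ r}) : hausdorffDist s t ≤ r := by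
  refine hausdorffDist_le_of_infDist hr (fun x hx ↦ ?_) (fun x hx ↦ ?_)
  · exact (Set.ext_iff.1 h x).1 ((infDist_zero_of_mem hx).trans_le hr)
  · exact (Set.ext_iff.1 h x).2 ((infDist_zero_of_mem hx).trans_le hr)

variable [IsUltrametricDist X]

theorem infDist_le_max_dist_infDist (x y : X) (s : Set X) :
    infDist x s ≤ max (dist x y) (infDist y s) := by
  rcases s.eq_empty_or_nonempty with rfl | hs
  · simp
  refine le_of_forall_gt_imp_ge_of_dense fun r hr ↦ ?_
  obtain ⟨z, hz, hyz⟩ := (infDist_lt_iff hs).1 ((le_max_right _ _).trans_lt hr)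
  calc infDist x s ≤ dist x z := infDist_le_dist_of_mem hz
    _ ≤ max (dist x y) (dist y z) := IsUltrametricDist.dist_triangle_max x y z
    _ ≤ r := max_le ((le_max_left _ _).trans hr.le) hyz.le

theorem infDist_le_max_infDist_hausdorffDist (x : X) (fin : hausdorffEDist s t ≠ ⊤) :
    infDist x t ≤ max (infDist x s) (hausdorffDist s t) := by
  rcases s.eq_empty_or_nonempty with rfl | hs
  · rw [hausdorffEDist_comm] at fin
    have ht : t = ∅ := Set.not_nonempty_iff_eq_empty.1
      fun ht ↦ Set.not_nonempty_empty (nonempty_of_hausdorffEDist_ne_top ht fin)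
    simp [ht]
  refine le_of_forall_gt_imp_ge_of_dense fun r hr ↦ ?_
  obtain ⟨y, hy, hxy⟩ := (infDist_lt_iff hs).1 ((le_max_left _ _).trans_lt hr)
  calc infDist x t ≤ max (dist x y) (infDist y t) := infDist_le_max_dist_infDist x y t
    _ ≤ r := max_le hxy.le <|
      (infDist_le_hausdorffDist_of_mem hy fin).trans ((le_max_right _ _).trans hr.le)

theorem setOf_infDist_le_eq_of_hausdorffDist_le (fin : hausdorffEDist s t ≠ ⊤)
    (h : hausdorffDist s t ≤ r) : {x | infDist x s ≤ r} = {x | infDist x t ≤ r} := by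
  ext x
  constructor
  · intro hx
    exact (infDist_le_max_infDist_hausdorffDist x fin).trans (max_le hx h)
  · intro hx
    rw [hausdorffEDist_comm] at fin
    rw [hausdorffDist_comm] at h
    exact (infDist_le_max_infDist_hausdorffDist x fin).trans (max_le hx h)

end Metric

theorem hausdorffDist_ultrametric_structure_general (X : Type) [MetricSpace X] [CompactSpace X]
    (hu : ∀ x y z : X, dist x z ≤ max (dist x y) (dist y z))
    (A B : Set X)
    (hAne : A.Nonempty) (hBne : B.Nonempty) :
    IsLeast {t : ℝ | 0 ≤ t ∧
        {x : X | Metric.infDist x A ≤ t} = {x : X | Metric.infDist x B ≤ t}}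
      (Metric.hausdorffDist A B) := by
  have : IsUltrametricDist X := ⟨hu⟩
  have fin : hausdorffEDist A B ≠ ⊤ := hausdorffEDist_ne_top_of_nonempty_of_bounded hAne hBne
    isBounded_of_compactSpace isBounded_of_compactSpace
  exact ⟨⟨hausdorffDist_nonneg, setOf_infDist_le_eq_of_hausdorffDist_le fin le_rfl⟩,
    fun _ ⟨ht, h⟩ ↦ hausdorffDist_le_of_setOf_infDist_le_eq ht h⟩

/-- Structural theorem for the Hausdorff distance on compact ultrametric spaces:
for nonempty closed subsets `A`, `B`, the Hausdorff distance between `A` and `B` is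
the least `t ≥ 0` such that the closed `t`-neighborhoods of `A` and `B` coincide;
in particular this minimum is attained. -/
theorem hausdorffDist_ultrametric_structure (X : Type) [MetricSpace X] [CompactSpace X]
    (hu : ∀ x y z : X, dist x z ≤ max (dist x y) (dist y z))
    (A B : Set X) (hA : IsClosed A) (hB : IsClosed B)
    (hAne : A.Nonempty) (hBne : B.Nonempty) :
    IsLeast {t : ℝ | 0 ≤ t ∧
        {x : X | Metric.infDist x A ≤ t} = {x : X | Metric.infDist x B ≤ t}}
      (Metric.hausdorffDist A B) :=
  hausdorffDist_ultrametric_structure_general X hu A B hAne hBne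
end

section
/- Let X and Y be nonempty compact ultrametric spaces. For an integer n ≥ 1 and t ≥ 0, define the t-quotient curvature set K_n^t(X) as the set of n × n real matrices M for which there exist x_1,…,x_n ∈ X with M_{ij} = 0 whenever u_X(x_i,x_j) ≤ t and M_{ij} = u_X(x_i,x_j) whenever u_X(x_i,x_j) > t. Then u_GH(X,Y) = sup over integers n ≥ 1 of min{ t ≥ 0 : K_n^t(X) = K_n^t(Y) }, where each inner minimum is attained. -/
noncomputable section

/-- The `t`-quotient curvature set of order `n` of an ultrametric space `X`:
`n × n` real matrices `M` for which there are `x_1, …, x_n ∈ X` with `M i j = 0`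
whenever `dist (x i) (x j) ≤ t`, and `M i j = dist (x i) (x j)` whenever
`dist (x i) (x j) > t`. -/
def quotCurvSet (X : Type) [MetricSpace X] (n : ℕ) (t : ℝ) :
    Set (Fin n → Fin n → ℝ) :=
  {M | ∃ x : Fin n → X, ∀ i j,
      (dist (x i) (x j) ≤ t → M i j = 0) ∧
      (t < dist (x i) (x j) → M i j = dist (x i) (x j))}

open Filter Topology

set_option linter.unusedSectionVars false
namespace UGHAux

open Filter Topology Set

/-- truncation of a matrix at level t -/
def trunc {n : ℕ} (t : ℝ) (M : Fin n → Fin n → ℝ) : Fin n → Fin n → ℝ :=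
  fun i j => if M i j ≤ t then 0 else M i j

lemma trunc_mem {Z : Type} [MetricSpace Z] {n : ℕ} {t t' : ℝ} (h0 : 0 ≤ t) (h : t ≤ t')
    {M : Fin n → Fin n → ℝ} (hM : M ∈ quotCurvSet Z n t) :
    trunc t' M ∈ quotCurvSet Z n t' := by
  obtain ⟨x, hx⟩ := hM
  refine ⟨x, fun i j => ⟨fun hle => ?_, fun hgt => ?_⟩⟩
  · rcases le_or_gt (dist (x i) (x j)) t with hc | hc
    · have := (hx i j).1 hc
      simp only [trunc]
      rw [this, if_pos (h0.trans h)]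
    · have := (hx i j).2 hc
      simp only [trunc]
      rw [this, if_pos hle]
  · have hc : t < dist (x i) (x j) := lt_of_le_of_lt h hgt
    have hMij := (hx i j).2 hc
    simp only [trunc, hMij]
    rw [if_neg (not_le.2 hgt)]

lemma quotCurvSet_image {Z : Type} [MetricSpace Z] {n : ℕ} {t t' : ℝ} (h0 : 0 ≤ t) (h : t ≤ t') :
    quotCurvSet Z n t' = trunc t' '' quotCurvSet Z n t := by
  apply Set.Subset.antisymm
  · rintro M' ⟨x, hx⟩
    refine ⟨fun i j => if dist (x i) (x j) ≤ t then 0 else dist (x i) (x j),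
      ⟨x, fun i j => ⟨fun hle => if_pos hle, fun hgt => if_neg (not_le.2 hgt)⟩⟩, ?_⟩
    funext i j
    rcases le_or_gt (dist (x i) (x j)) t with hc | hc
    · have h1 : M' i j = 0 := (hx i j).1 (hc.trans h)
      simp [trunc, if_pos hc, h1, h0.trans h]
    · rcases le_or_gt (dist (x i) (x j)) t' with hc' | hc'
      · have h1 : M' i j = 0 := (hx i j).1 hc'
        simp [trunc, if_neg (not_le.2 hc), hc', h1]
      · have h1 : M' i j = dist (x i) (x j) := (hx i j).2 hc'
        simp [trunc, if_neg (not_le.2 hc), if_neg (not_le.2 hc'), h1]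
  · rintro _ ⟨M, hM, rfl⟩
    exact trunc_mem h0 h hM

lemma quotCurvSet_eq_zero {Z : Type} [MetricSpace Z] [Nonempty Z] {n : ℕ} {t : ℝ}
    (ht : 0 ≤ t) (hbig : ∀ a b : Z, dist a b ≤ t) :
    quotCurvSet Z n t = {M | ∀ i j, M i j = 0} := by
  apply Set.Subset.antisymm
  · rintro M ⟨x, hx⟩ i j
    exact (hx i j).1 (hbig _ _)
  · intro M hM
    refine ⟨fun _ => Classical.arbitrary Z, fun i j => ⟨fun _ => hM i j, fun hgt => ?_⟩⟩
    exact absurd hgt (not_lt.2 (by simpa using ht))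


lemma lambdaInf_comm (a b : ℝ) : lambdaInf a b = lambdaInf b a := by
  unfold lambdaInf
  by_cases h : a = b
  · simp [h]
  · rw [if_neg h, if_neg (Ne.symm h), max_comm]

lemma lambdaInf_self (a : ℝ) : lambdaInf a a = 0 := if_pos rfl

lemma exists_bound (Z : Type) [MetricSpace Z] [CompactSpace Z] [Nonempty Z] :
    ∃ C : ℝ, 0 ≤ C ∧ ∀ a b : Z, dist a b ≤ C := by
  obtain ⟨C, hC⟩ := Metric.isBounded_iff.1 (isCompact_univ : IsCompact (Set.univ : Set Z)).isBounded
  have h0 : (0:ℝ) ≤ C := by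
    have := hC (mem_univ (Classical.arbitrary Z)) (mem_univ (Classical.arbitrary Z))
    simpa using this
  exact ⟨C, h0, fun a b => hC (mem_univ a) (mem_univ b)⟩

section Dis

variable {X Y : Type} [MetricSpace X] [CompactSpace X] [Nonempty X]
  [MetricSpace Y] [CompactSpace Y] [Nonempty Y]

lemma dis_set_bddAbove (R : Set (X × Y)) :
    BddAbove {r : ℝ | ∃ a ∈ R, ∃ b ∈ R, r = lambdaInf (dist a.1 b.1) (dist a.2 b.2)} := by
  obtain ⟨C, hC0, hC⟩ := exists_bound X
  obtain ⟨D, hD0, hD⟩ := exists_bound Y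
  refine ⟨max C D, ?_⟩
  rintro r ⟨a, -, b, -, rfl⟩
  unfold lambdaInf
  split_ifs
  · exact le_max_iff.2 (Or.inl hC0)
  · exact max_le_max (hC _ _) (hD _ _)

lemma zero_mem_dis_set {R : Set (X × Y)} (hR : R.Nonempty) :
    (0:ℝ) ∈ {r : ℝ | ∃ a ∈ R, ∃ b ∈ R, r = lambdaInf (dist a.1 b.1) (dist a.2 b.2)} := by
  obtain ⟨a, ha⟩ := hR
  exact ⟨a, ha, a, ha, by simp [lambdaInf_self]⟩

lemma le_infDistortion {R : Set (X × Y)} {a b : X × Y} (ha : a ∈ R) (hb : b ∈ R) :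
    lambdaInf (dist a.1 b.1) (dist a.2 b.2) ≤ infDistortion R :=
  le_csSup (dis_set_bddAbove R) ⟨a, ha, b, hb, rfl⟩

lemma infDistortion_nonneg {R : Set (X × Y)} (hR : R.Nonempty) : 0 ≤ infDistortion R :=
  le_csSup (dis_set_bddAbove R) (zero_mem_dis_set hR)

lemma infDistortion_le {R : Set (X × Y)} (hR : R.Nonempty) {t : ℝ}
    (h : ∀ a ∈ R, ∀ b ∈ R, lambdaInf (dist a.1 b.1) (dist a.2 b.2) ≤ t) :
    infDistortion R ≤ t := by
  apply csSup_le ⟨0, zero_mem_dis_set hR⟩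
  rintro r ⟨a, ha, b, hb, rfl⟩
  exact h a ha b hb

lemma subset_of_rel {R : Set (X × Y)} (h1 : ∀ x : X, ∃ y : Y, (x, y) ∈ R) {r : ℝ}
    (hb : ∀ a ∈ R, ∀ b ∈ R, lambdaInf (dist a.1 b.1) (dist a.2 b.2) ≤ r) (n : ℕ) :
    quotCurvSet X n r ⊆ quotCurvSet Y n r := by
  rintro M ⟨x, hx⟩
  choose y hy using fun i => h1 (x i)
  refine ⟨y, fun i j => ?_⟩
  have hL := hb (x i, y i) (hy i) (x j, y j) (hy j)
  simp only [lambdaInf] at hL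
  by_cases he : dist (x i) (x j) = dist (y i) (y j)
  · rw [if_pos he] at hL
    exact ⟨fun hd => (hx i j).1 (he ▸ hd), fun hd => ((hx i j).2 (he ▸ hd)).trans he⟩
  · rw [if_neg he] at hL
    have hxr : dist (x i) (x j) ≤ r := le_trans (le_max_left _ _) hL
    have hyr : dist (y i) (y j) ≤ r := le_trans (le_max_right _ _) hL
    exact ⟨fun _ => (hx i j).1 hxr, fun hd => absurd hyr (not_le.2 hd)⟩

end Dis

section Ultra

variable {X : Type} [MetricSpace X]

/-- ultrametric isosceles: if `dist p q ≤ t < dist q r` then `dist p r = dist q r`. -/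
lemma isosceles (hX : ∀ x y z : X, dist x z ≤ max (dist x y) (dist y z))
    {p q r : X} {t : ℝ} (h1 : dist p q ≤ t) (h2 : t < dist q r) : dist p r = dist q r := by
  apply le_antisymm
  · calc dist p r ≤ max (dist p q) (dist q r) := hX p q r
    _ = dist q r := max_eq_right (h1.trans h2.le)
  · have h3 := hX q p r
    rw [dist_comm q p] at h3
    rcases le_max_iff.1 h3 with h | h
    · linarith
    · exact h

/-- the distance between points close to two separated centers equals the center distance. -/
lemma dist_eq_of_close (hX : ∀ x y z : X, dist x z ≤ max (dist x y) (dist y z))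
    {a a' p q : X} {t : ℝ} (ha : dist a p ≤ t) (ha' : dist a' q ≤ t)
    (hsep : t < dist p q) : dist a a' = dist p q := by
  have h1 : dist a q = dist p q := isosceles hX ha hsep
  have h2 : dist a' a = dist q a := by
    apply isosceles hX ha'
    rw [dist_comm]
    rw [h1]
    exact hsep
  rw [dist_comm a a', h2, dist_comm q a, h1]

/-- the `t`-closed relation as a setoid, for ultrametric `X`. -/
def tsetoid (hX : ∀ x y z : X, dist x z ≤ max (dist x y) (dist y z)) {t : ℝ} (ht : 0 ≤ t) :
    Setoid X where
  r a b := dist a b ≤ t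
  iseqv := ⟨fun a => by simpa using ht,
    fun {a b} h => by rwa [dist_comm],
    fun {a b c} h1 h2 => le_trans (hX a b c) (max_le h1 h2)⟩

lemma finite_tquot [CompactSpace X]
    (hX : ∀ x y z : X, dist x z ≤ max (dist x y) (dist y z)) {t : ℝ} (ht : 0 < t) :
    Finite (Quotient (tsetoid hX ht.le)) := by
  obtain ⟨F, hFfin, hF⟩ := Metric.totallyBounded_iff.1
    (isCompact_univ : IsCompact (Set.univ : Set X)).totallyBounded t ht
  haveI := hFfin.to_subtype
  apply Finite.of_surjective (fun p : F => (⟦p.1⟧ : Quotient (tsetoid hX ht.le)))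
  intro q
  induction q using Quotient.ind with
  | _ x =>
    have hx := hF (Set.mem_univ x)
    simp only [Set.mem_iUnion] at hx
    obtain ⟨f, hfF, hxf⟩ := hx
    refine ⟨⟨f, hfF⟩, Quotient.sound ?_⟩
    show dist f x ≤ t
    rw [dist_comm]
    exact (Metric.mem_ball.1 hxf).le

/-- existence of a maximal family of `t`-separated representatives. -/
lemma exists_reps [CompactSpace X] [Nonempty X]
    (hX : ∀ x y z : X, dist x z ≤ max (dist x y) (dist y z)) {t : ℝ} (ht : 0 < t) :
    ∃ N : ℕ, 1 ≤ N ∧ ∃ x : Fin N → X,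
      (∀ i j, i ≠ j → t < dist (x i) (x j)) ∧
      (∀ (m : ℕ) (w : Fin m → X), (∀ i j, i ≠ j → t < dist (w i) (w j)) → m ≤ N) := by
  haveI := finite_tquot hX ht
  haveI := Fintype.ofFinite (Quotient (tsetoid hX ht.le))
  haveI : Nonempty (Quotient (tsetoid hX ht.le)) := ⟨⟦Classical.arbitrary X⟧⟩
  set Q := Quotient (tsetoid hX ht.le) with hQ
  refine ⟨Fintype.card Q, Fintype.card_pos, ?_⟩
  set e := Fintype.equivFin Q with he
  refine ⟨fun i => (e.symm i).out, fun i j hij => ?_, fun m w hw => ?_⟩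
  · by_contra hle
    push_neg at hle
    apply hij
    apply e.symm.injective
    rw [← Quotient.out_eq (e.symm i), ← Quotient.out_eq (e.symm j)]
    exact Quotient.sound hle
  · have hinj : Function.Injective (fun i : Fin m => (⟦w i⟧ : Q)) := by
      intro i j hijq
      by_contra hij
      exact absurd (Quotient.exact hijq) (not_le.2 (hw i j hij))
    simpa using Fintype.card_le_of_injective _ hinj

/-- a maximal-size separated family is a `t`-net. -/
lemma net_of_max {t : ℝ} {N : ℕ} (x : Fin N → X)
    (hsep : ∀ i j, i ≠ j → t < dist (x i) (x j))
    (hmax : ∀ (m : ℕ) (w : Fin m → X), (∀ i j, i ≠ j → t < dist (w i) (w j)) → m ≤ N) :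
    ∀ a : X, ∃ i, dist a (x i) ≤ t := by
  intro a
  by_contra hnone
  push_neg at hnone
  have hsep' : ∀ i j, i ≠ j → t < dist ((Fin.cons a x : Fin (N+1) → X) i) ((Fin.cons a x : Fin (N+1) → X) j) := by
    intro i j hij
    induction i using Fin.cases with
    | zero =>
      induction j using Fin.cases with
      | zero => exact absurd rfl hij
      | succ j' => simpa using hnone j'
    | succ i' =>
      induction j using Fin.cases with
      | zero =>
        simp only [Fin.cons_succ, Fin.cons_zero]
        rw [dist_comm]
        exact hnone i'
      | succ j' =>
        simp only [Fin.cons_succ]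
        refine hsep i' j' fun hcon => hij ?_
        rw [hcon]
  have := hmax (N + 1) (Fin.cons a x : Fin (N+1) → X) hsep'
  omega

end Ultra

/-- transport a separated family through an inclusion of curvature sets. -/
lemma transport {X Y : Type} [MetricSpace X] [MetricSpace Y] {n : ℕ} {t : ℝ} (ht : 0 ≤ t)
    (h : quotCurvSet X n t ⊆ quotCurvSet Y n t) (x : Fin n → X)
    (hsep : ∀ i j, i ≠ j → t < dist (x i) (x j)) :
    ∃ y : Fin n → Y, ∀ i j, i ≠ j → dist (y i) (y j) = dist (x i) (x j) := by
  have hM : (fun i j => if dist (x i) (x j) ≤ t then 0 else dist (x i) (x j)) ∈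
      quotCurvSet X n t :=
    ⟨x, fun i j => ⟨fun h' => if_pos h', fun h' => if_neg (not_le.2 h')⟩⟩
  obtain ⟨y, hy⟩ := h hM
  refine ⟨y, fun i j hij => ?_⟩
  have hd := hsep i j hij
  have hMij : (if dist (x i) (x j) ≤ t then (0:ℝ) else dist (x i) (x j)) = dist (x i) (x j) :=
    if_neg (not_le.2 hd)
  rcases le_or_gt (dist (y i) (y j)) t with hc | hc
  · have h1 := (hy i j).1 hc
    simp only [if_neg (not_le.2 hd)] at h1
    linarith
  · have h1 := (hy i j).2 hc
    simp only [if_neg (not_le.2 hd)] at h1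
    exact h1.symm

/-- main construction: equal curvature sets at level `t > 0` give a correspondence with
pointwise distortion at most `t`. -/
lemma exists_good_corr (X Y : Type)
    [MetricSpace X] [CompactSpace X] [Nonempty X]
    [MetricSpace Y] [CompactSpace Y] [Nonempty Y]
    (hX : ∀ x y z : X, dist x z ≤ max (dist x y) (dist y z))
    (hY : ∀ x y z : Y, dist x z ≤ max (dist x y) (dist y z))
    {t : ℝ} (ht : 0 < t)
    (h : ∀ n : ℕ, 1 ≤ n → quotCurvSet X n t = quotCurvSet Y n t) :
    ∃ R : Set (X × Y), IsCorrespondence R ∧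
      ∀ a ∈ R, ∀ b ∈ R, lambdaInf (dist a.1 b.1) (dist a.2 b.2) ≤ t := by
  obtain ⟨Nx, hNx1, x, hxsep, hxmax⟩ := exists_reps hX ht
  obtain ⟨Ny, hNy1, y', hysep, hymax⟩ := exists_reps hY ht
  obtain ⟨y, hyd⟩ := transport ht.le (h Nx hNx1).le x hxsep
  have hysep2 : ∀ i j, i ≠ j → t < dist (y i) (y j) := by
    intro i j hij
    rw [hyd i j hij]
    exact hxsep i j hij
  obtain ⟨x2, hx2⟩ := transport ht.le (h Ny hNy1).ge y' hysep
  have hx2sep : ∀ i j, i ≠ j → t < dist (x2 i) (x2 j) := by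
    intro i j hij
    rw [hx2 i j hij]
    exact hysep i j hij
  have hNyx : Ny ≤ Nx := hxmax Ny x2 hx2sep
  have hymax' : ∀ (m : ℕ) (w : Fin m → Y), (∀ i j, i ≠ j → t < dist (w i) (w j)) → m ≤ Nx :=
    fun m w hw => (hymax m w hw).trans hNyx
  have hxnet := net_of_max x hxsep hxmax
  have hynet := net_of_max y hysep2 hymax'
  refine ⟨{p : X × Y | ∃ i, dist p.1 (x i) ≤ t ∧ dist p.2 (y i) ≤ t}, ⟨?_, ?_⟩, ?_⟩
  · intro a
    obtain ⟨i, hi⟩ := hxnet a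
    exact ⟨y i, i, hi, by simp [ht.le]⟩
  · intro b
    obtain ⟨i, hi⟩ := hynet b
    exact ⟨x i, i, by simp [ht.le], hi⟩
  · rintro ⟨a, b⟩ ⟨i, hai, hbi⟩ ⟨a', b'⟩ ⟨j, haj, hbj⟩
    simp only [lambdaInf]
    by_cases hij : i = j
    · subst hij
      split_ifs with he
      · exact ht.le
      · refine max_le ?_ ?_
        · calc dist a a' ≤ max (dist a (x i)) (dist (x i) a') := hX a (x i) a'
            _ ≤ t := max_le hai (by rw [dist_comm]; exact haj)
        · calc dist b b' ≤ max (dist b (y i)) (dist (y i) b') := hY b (y i) b'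
            _ ≤ t := max_le hbi (by rw [dist_comm]; exact hbj)
    · have h1 : dist a a' = dist (x i) (x j) := dist_eq_of_close hX hai haj (hxsep i j hij)
      have h2 : dist b b' = dist (y i) (y j) := dist_eq_of_close hY hbi hbj (hysep2 i j hij)
      rw [if_pos (by rw [h1, h2, hyd i j hij])]
      exact ht.le

/-- the inclusion of curvature sets passes to the infimum level, by compactness of `Y`. -/
lemma subset_at_inf {X Y : Type} [MetricSpace X] [MetricSpace Y] [CompactSpace Y]
    {n : ℕ} {τ : ℝ} (hτ : 0 ≤ τ)
    (h : ∀ t : ℝ, τ < t → quotCurvSet X n t ⊆ quotCurvSet Y n t) :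
    quotCurvSet X n τ ⊆ quotCurvSet Y n τ := by
  rintro M ⟨x, hx⟩
  have hyk : ∀ k : ℕ, ∃ y : Fin n → Y, ∀ i j,
      (dist (y i) (y j) ≤ τ + 1/(k+1) → trunc (τ + 1/(k+1)) M i j = 0) ∧
      (τ + 1/(k+1) < dist (y i) (y j) → trunc (τ + 1/(k+1)) M i j = dist (y i) (y j)) := by
    intro k
    have h1 : (0:ℝ) < 1/(k+1) := by positivity
    exact h (τ + 1/(k+1)) (by linarith) (trunc_mem hτ (by linarith) ⟨x, hx⟩)
  choose y hy using hyk
  obtain ⟨ylim, -, φ, hφ, hconv⟩ :=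
    (isCompact_univ : IsCompact (Set.univ : Set (Fin n → Y))).tendsto_subseq
      (fun k => Set.mem_univ (y k))
  have htk : Tendsto (fun m : ℕ => τ + 1/((φ m : ℝ)+1)) atTop (𝓝 τ) := by
    have h0 : Tendsto (fun m : ℕ => 1/((φ m : ℝ)+1)) atTop (𝓝 0) :=
      tendsto_one_div_add_atTop_nhds_zero_nat.comp hφ.tendsto_atTop
    simpa using tendsto_const_nhds.add h0
  refine ⟨ylim, fun i j => ?_⟩
  have hd : Tendsto (fun m => dist (y (φ m) i) (y (φ m) j)) atTop
      (𝓝 (dist (ylim i) (ylim j))) :=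
    (tendsto_pi_nhds.1 hconv i).dist (tendsto_pi_nhds.1 hconv j)
  by_cases hij : dist (x i) (x j) ≤ τ
  · have hM0 : M i j = 0 := (hx i j).1 hij
    have hle : ∀ k : ℕ, dist (y k i) (y k j) ≤ τ + 1/(k+1) := by
      intro k
      by_contra hgt
      push_neg at hgt
      have h2 := (hy k i j).2 hgt
      have h0 : trunc (τ + 1/(k+1)) M i j = 0 := by
        simp only [trunc, hM0]
        rw [if_pos (by positivity)]
      rw [h0] at h2
      have hpos : (0:ℝ) < τ + 1/(k+1) := by positivity
      linarith
    have hfin : dist (ylim i) (ylim j) ≤ τ :=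
      le_of_tendsto_of_tendsto' hd htk (fun m => hle (φ m))
    exact ⟨fun _ => hM0, fun hgt => absurd hfin (not_le.2 hgt)⟩
  · push_neg at hij
    have hMd : M i j = dist (x i) (x j) := (hx i j).2 hij
    obtain ⟨K, hK⟩ := exists_nat_one_div_lt (show (0:ℝ) < dist (x i) (x j) - τ by linarith)
    have hev : ∀ k : ℕ, K ≤ k → dist (y k i) (y k j) = dist (x i) (x j) := by
      intro k hk
      have hlt : 1/((k:ℝ)+1) ≤ 1/((K:ℝ)+1) := by
        apply one_div_le_one_div_of_le
        · positivity
        · have : (K:ℝ) ≤ k := Nat.cast_le.2 hk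
          linarith
      have htk' : τ + 1/((k:ℝ)+1) < dist (x i) (x j) := by linarith
      have htr : trunc (τ + 1/(k+1)) M i j = dist (x i) (x j) := by
        simp only [trunc, hMd]
        rw [if_neg (not_le.2 htk')]
      rcases le_or_gt (dist (y k i) (y k j)) (τ + 1/(k+1)) with hc | hc
      · have := (hy k i j).1 hc
        rw [htr] at this
        linarith
      · have := (hy k i j).2 hc
        rw [htr] at this
        exact this.symm
    have hconst : Tendsto (fun m => dist (y (φ m) i) (y (φ m) j)) atTop
        (𝓝 (dist (x i) (x j))) := by
      have heq : (fun _ : ℕ => dist (x i) (x j)) =ᶠ[atTop]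
          fun m => dist (y (φ m) i) (y (φ m) j) :=
        Filter.eventually_atTop.2 ⟨K, fun m hm => (hev (φ m) (hm.trans hφ.le_apply)).symm⟩
      exact Tendsto.congr' heq tendsto_const_nhds
    have hfin : dist (ylim i) (ylim j) = dist (x i) (x j) :=
      tendsto_nhds_unique hd hconst
    refine ⟨fun hle => ?_, fun _ => by rw [hMd, hfin]⟩
    rw [hfin] at hle
    linarith

end UGHAux

open UGHAux

/-- Curvature sets permit calculating `u_GH`: for nonempty compact ultrametric spaces,
`u_GH(X,Y) = sup_{n ≥ 1} min{ t ≥ 0 : K_n^t(X) = K_n^t(Y) }`, and each inner minimum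
is attained. -/
theorem uGH_eq_sup_quotCurvSet (X Y : Type)
    [MetricSpace X] [CompactSpace X] [Nonempty X]
    [MetricSpace Y] [CompactSpace Y] [Nonempty Y]
    (hX : ∀ x y z : X, dist x z ≤ max (dist x y) (dist y z))
    (hY : ∀ x y z : Y, dist x z ≤ max (dist x y) (dist y z)) :
    (∀ n : ℕ, 1 ≤ n →
      sInf {t : ℝ | 0 ≤ t ∧ quotCurvSet X n t = quotCurvSet Y n t} ∈
        {t : ℝ | 0 ≤ t ∧ quotCurvSet X n t = quotCurvSet Y n t}) ∧
    uGH X Y = ⨆ n : {m : ℕ // 1 ≤ m},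
      sInf {t : ℝ | 0 ≤ t ∧ quotCurvSet X n.1 t = quotCurvSet Y n.1 t} := by
  classical
  set S : ℕ → Set ℝ := fun n => {t : ℝ | 0 ≤ t ∧ quotCurvSet X n t = quotCurvSet Y n t}
    with hSdef
  obtain ⟨Cx, hCx0, hCx⟩ := exists_bound X
  obtain ⟨Cy, hCy0, hCy⟩ := exists_bound Y
  set t0 := max Cx Cy with ht0def
  have ht00 : (0:ℝ) ≤ t0 := le_max_iff.2 (Or.inl hCx0)
  have ht0X : ∀ a b : X, dist a b ≤ t0 := fun a b => (hCx a b).trans (le_max_left _ _)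
  have ht0Y : ∀ a b : Y, dist a b ≤ t0 := fun a b => (hCy a b).trans (le_max_right _ _)
  have ht0mem : ∀ n : ℕ, t0 ∈ S n := by
    intro n
    refine ⟨ht00, ?_⟩
    rw [quotCurvSet_eq_zero ht00 ht0X, quotCurvSet_eq_zero ht00 ht0Y]
  have hSne : ∀ n, (S n).Nonempty := fun n => ⟨t0, ht0mem n⟩
  have hSbdd : ∀ n, BddBelow (S n) := fun n => ⟨0, fun t ht => ht.1⟩
  have hup : ∀ n : ℕ, ∀ {t t' : ℝ}, t ∈ S n → t ≤ t' → t' ∈ S n := by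
    rintro n t t' ⟨ht0', heq⟩ htt'
    refine ⟨ht0'.trans htt', ?_⟩
    rw [quotCurvSet_image (Z := X) ht0' htt', quotCurvSet_image (Z := Y) ht0' htt', heq]
  have hInf0 : ∀ n, (0:ℝ) ≤ sInf (S n) := fun n => le_csInf (hSne n) fun t ht => ht.1
  have hmemInf : ∀ n : ℕ, sInf (S n) ∈ S n := by
    intro n
    have hall : ∀ t : ℝ, sInf (S n) < t → t ∈ S n := by
      intro t htlt
      obtain ⟨s', hs, hst⟩ := exists_lt_of_csInf_lt (hSne n) htlt
      exact hup n hs hst.le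
    refine ⟨hInf0 n, Set.Subset.antisymm ?_ ?_⟩
    · exact subset_at_inf (hInf0 n) fun t hlt => ((hall t hlt).2).le
    · exact subset_at_inf (hInf0 n) fun t hlt => ((hall t hlt).2).ge
  haveI : Nonempty {m : ℕ // 1 ≤ m} := ⟨⟨1, le_refl 1⟩⟩
  refine ⟨fun n _ => hmemInf n, ?_⟩
  have hFbdd : BddAbove (Set.range fun n : {m : ℕ // 1 ≤ m} => sInf (S n.1)) := by
    refine ⟨t0, ?_⟩
    rintro r ⟨n, rfl⟩
    exact csInf_le (hSbdd n.1) (ht0mem n.1)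
  have hbddlow : BddBelow {r : ℝ | ∃ R : Set (X × Y), IsCorrespondence R ∧ r = infDistortion R} := by
    refine ⟨0, ?_⟩
    rintro r ⟨R, hR, rfl⟩
    obtain ⟨y0, hy0⟩ := hR.1 (Classical.arbitrary X)
    exact infDistortion_nonneg ⟨_, hy0⟩
  apply le_antisymm
  · apply le_of_forall_gt_imp_ge_of_dense
    intro t htgt
    have hFle : ∀ n : {m : ℕ // 1 ≤ m}, sInf (S n.1) < t :=
      fun n => lt_of_le_of_lt (le_ciSup hFbdd n) htgt
    have ht0' : (0:ℝ) < t := lt_of_le_of_lt (hInf0 1) (hFle ⟨1, le_refl 1⟩)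
    have heq : ∀ n : ℕ, 1 ≤ n → quotCurvSet X n t = quotCurvSet Y n t :=
      fun n hn => (hup n (hmemInf n) (hFle ⟨n, hn⟩).le).2
    obtain ⟨R, hR, hRb⟩ := exists_good_corr X Y hX hY ht0' heq
    have hRne : R.Nonempty := by
      obtain ⟨y0, hy0⟩ := hR.1 (Classical.arbitrary X)
      exact ⟨_, hy0⟩
    have h1 : uGH X Y ≤ infDistortion R := csInf_le hbddlow ⟨R, hR, rfl⟩
    exact h1.trans (infDistortion_le hRne hRb)
  · apply ciSup_le
    intro n
    have hne : {r : ℝ | ∃ R : Set (X × Y), IsCorrespondence R ∧ r = infDistortion R}.Nonempty := by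
      refine ⟨infDistortion (Set.univ : Set (X × Y)), Set.univ, ⟨?_, ?_⟩, rfl⟩
      · exact fun x => ⟨Classical.arbitrary Y, trivial⟩
      · exact fun y => ⟨Classical.arbitrary X, trivial⟩
    apply le_csInf hne
    rintro r ⟨R, hR, rfl⟩
    have hRne : R.Nonempty := by
      obtain ⟨y0, hy0⟩ := hR.1 (Classical.arbitrary X)
      exact ⟨_, hy0⟩
    apply csInf_le (hSbdd n.1)
    refine ⟨infDistortion_nonneg hRne, Set.Subset.antisymm ?_ ?_⟩
    · exact subset_of_rel hR.1 (fun a ha b hb => le_infDistortion ha hb) n.1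
    · refine subset_of_rel (X := Y) (Y := X) (R := {p : Y × X | (p.2, p.1) ∈ R})
        (fun yy => ?_) (fun a ha b hb => ?_) n.1
      · obtain ⟨x0, hx0⟩ := hR.2 yy
        exact ⟨x0, hx0⟩
      · rw [lambdaInf_comm]
        exact le_infDistortion (a := (a.2, a.1)) (b := (b.2, b.1)) ha hb
end
end

section
/- Let X and Y be nonempty compact ultrametric spaces. Then Λ_∞(diam X, diam Y) ≤ u_GH(X,Y) ≤ max(diam X, diam Y). In particular, if diam X ≠ diam Y then u_GH(X,Y) = max(diam X, diam Y). -/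
noncomputable section

lemma lambdaInf_le_max {a b : ℝ} (ha : 0 ≤ a) : lambdaInf a b ≤ max a b := by
  unfold lambdaInf
  split
  · exact le_max_of_le_left ha
  · exact le_rfl

lemma exists_dist_eq_diam_univ (X : Type*) [MetricSpace X] [CompactSpace X]
    [Nonempty X] : ∃ x x' : X, dist x x' = Metric.diam (Set.univ : Set X) := by
  obtain ⟨p, -, hp⟩ := (isCompact_univ (X := X × X)).exists_isMaxOn
    Set.univ_nonempty ((continuous_dist.comp (continuous_fst.prodMk continuous_snd)).continuousOn)
  refine ⟨p.1, p.2, le_antisymm ?_ ?_⟩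
  · exact Metric.dist_le_diam_of_mem isCompact_univ.isBounded (Set.mem_univ _) (Set.mem_univ _)
  · exact Metric.diam_le_of_forall_dist_le dist_nonneg fun x _ y _ => hp (Set.mem_univ ((x, y) : X × X))

/-- Diameter bounds for `u_GH`:
`Λ_∞(diam X, diam Y) ≤ u_GH(X,Y) ≤ max(diam X, diam Y)`, and when the diameters
differ, `u_GH(X,Y) = max(diam X, diam Y)`. -/
theorem uGH_diam_bounds (X Y : Type)
    [MetricSpace X] [CompactSpace X] [Nonempty X]
    [MetricSpace Y] [CompactSpace Y] [Nonempty Y]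
    (hX : ∀ x y z : X, dist x z ≤ max (dist x y) (dist y z))
    (hY : ∀ x y z : Y, dist x z ≤ max (dist x y) (dist y z)) :
    lambdaInf (Metric.diam (Set.univ : Set X)) (Metric.diam (Set.univ : Set Y)) ≤
        uGH X Y ∧
    uGH X Y ≤ max (Metric.diam (Set.univ : Set X)) (Metric.diam (Set.univ : Set Y)) ∧
    (Metric.diam (Set.univ : Set X) ≠ Metric.diam (Set.univ : Set Y) →
      uGH X Y = max (Metric.diam (Set.univ : Set X)) (Metric.diam (Set.univ : Set Y))) := by
  set dX := Metric.diam (Set.univ : Set X)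
  set dY := Metric.diam (Set.univ : Set Y)
  set D := max dX dY with hD
  have hD0 : 0 ≤ D := le_max_of_le_left Metric.diam_nonneg
  -- bounds on dists
  have hdX : ∀ x x' : X, dist x x' ≤ dX := fun x x' =>
    Metric.dist_le_diam_of_mem isCompact_univ.isBounded (Set.mem_univ _) (Set.mem_univ _)
  have hdY : ∀ y y' : Y, dist y y' ≤ dY := fun y y' =>
    Metric.dist_le_diam_of_mem isCompact_univ.isBounded (Set.mem_univ _) (Set.mem_univ _)
  -- the distortion sets
  have hub : ∀ R : Set (X × Y),
      ∀ r ∈ {r : ℝ | ∃ a ∈ R, ∃ b ∈ R, r = lambdaInf (dist a.1 b.1) (dist a.2 b.2)}, r ≤ D := by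
    rintro R r ⟨a, -, b, -, rfl⟩
    exact (lambdaInf_le_max dist_nonneg).trans (max_le_max (hdX _ _) (hdY _ _))
  have hbdd : ∀ R : Set (X × Y),
      BddAbove {r : ℝ | ∃ a ∈ R, ∃ b ∈ R, r = lambdaInf (dist a.1 b.1) (dist a.2 b.2)} :=
    fun R => ⟨D, hub R⟩
  have hne : ∀ R : Set (X × Y), IsCorrespondence R →
      (0 : ℝ) ∈ {r : ℝ | ∃ a ∈ R, ∃ b ∈ R, r = lambdaInf (dist a.1 b.1) (dist a.2 b.2)} := by
    rintro R ⟨h1, -⟩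
    obtain ⟨y, hy⟩ := h1 (Classical.arbitrary X)
    exact ⟨_, hy, _, hy, by simp [lambdaInf]⟩
  have hdis_nonneg : ∀ R : Set (X × Y), IsCorrespondence R → 0 ≤ infDistortion R :=
    fun R hR => le_csSup (hbdd R) (hne R hR)
  have hdis_le : ∀ R : Set (X × Y), infDistortion R ≤ D :=
    fun R => Real.sSup_le (hub R) hD0
  have hcorr_univ : IsCorrespondence (Set.univ : Set (X × Y)) :=
    ⟨fun x => ⟨Classical.arbitrary Y, trivial⟩, fun y => ⟨Classical.arbitrary X, trivial⟩⟩
  have hTne : {r : ℝ | ∃ R : Set (X × Y), IsCorrespondence R ∧ r = infDistortion R}.Nonempty :=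
    ⟨infDistortion (Set.univ : Set (X × Y)), Set.univ, hcorr_univ, rfl⟩
  have hTbdd : BddBelow {r : ℝ | ∃ R : Set (X × Y), IsCorrespondence R ∧ r = infDistortion R} := by
    refine ⟨0, ?_⟩
    rintro r ⟨R, hR, rfl⟩
    exact hdis_nonneg R hR
  have hupper : uGH X Y ≤ D :=
    (csInf_le hTbdd ⟨Set.univ, hcorr_univ, rfl⟩).trans (hdis_le _)
  -- key lower bound: if dX ≠ dY then D ≤ infDistortion R for every correspondence R
  have hkey : dX ≠ dY → ∀ R : Set (X × Y), IsCorrespondence R → D ≤ infDistortion R := by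
    intro hne' R hR
    rcases lt_or_gt_of_ne hne' with h | h
    · -- dX < dY : take y,y' realizing diam Y
      obtain ⟨y, y', hyy⟩ := exists_dist_eq_diam_univ Y
      obtain ⟨x, hx⟩ := hR.2 y
      obtain ⟨x', hx'⟩ := hR.2 y'
      have hneq : dist ((x, y) : X × Y).1 ((x', y') : X × Y).1 ≠ dist y y' := by
        simp only
        rw [hyy]; exact ne_of_lt (lt_of_le_of_lt (hdX x x') h)
      have : D ≤ lambdaInf (dist x x') (dist y y') := by
        rw [lambdaInf, if_neg hneq, hD, hyy]
        exact max_le (le_max_of_le_right h.le) (le_max_right _ _)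
      exact this.trans (le_csSup (hbdd R) ⟨(x, y), hx, (x', y'), hx', rfl⟩)
    · obtain ⟨x, x', hxx⟩ := exists_dist_eq_diam_univ X
      obtain ⟨y, hy⟩ := hR.1 x
      obtain ⟨y', hy'⟩ := hR.1 x'
      have hneq : dist x x' ≠ dist ((x, y) : X × Y).2 ((x', y') : X × Y).2 := by
        simp only
        rw [hxx]; exact (ne_of_lt (lt_of_le_of_lt (hdY y y') h)).symm
      have : D ≤ lambdaInf (dist x x') (dist y y') := by
        rw [lambdaInf, if_neg hneq, hD, hxx]
        exact max_le (le_max_left _ _) (le_max_of_le_left h.le)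
      exact this.trans (le_csSup (hbdd R) ⟨(x, y), hy, (x', y'), hy', rfl⟩)
  have hlower : lambdaInf dX dY ≤ uGH X Y := by
    by_cases hcase : dX = dY
    · rw [lambdaInf, if_pos hcase]
      refine le_csInf hTne ?_
      rintro r ⟨R, hR, rfl⟩
      exact hdis_nonneg R hR
    · rw [lambdaInf, if_neg hcase]
      refine le_csInf hTne ?_
      rintro r ⟨R, hR, rfl⟩
      exact hkey hcase R hR
  refine ⟨hlower, hupper, fun hne' => le_antisymm hupper ?_⟩
  have := hlower
  rwa [lambdaInf, if_neg hne'] at this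
end
end
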